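/- arXiv:2111.00879 — 6 statements merged into one kernel-verified Lean document; each statement's English description precedes it below -/
import Mathlib

section
/- For any integers s ≥ 2 and t ≥ 2, there exist a constant c > 0 and a natural number n₀ such that for all n ≥ n₀, r(K_{n,n}, K_{s, st}, s²t - t(s-1) + 1) ≥ c·n^{1 + 1/t}. -/
open Finset

/-- `rBip n s t q` is the bipartite Erdős–Gyárfás function `r(K_{n,n}, K_{s,t}, q)`:
the minimum number of colors in an edge-coloring of `K_{n,n}` such that every copy of
`K_{s,t}` (with its part of size `s` in either side of the bipartition) receives at
least `q` distinct colors on its edges. -/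
noncomputable def rBip (n s t q : ℕ) : ℕ :=
  sInf {k : ℕ | ∃ c : Fin n → Fin n → ℕ,
    (∀ a b, c a b < k) ∧
    ∀ A B : Finset (Fin n),
      (A.card = s ∧ B.card = t) ∨ (A.card = t ∧ B.card = s) →
      q ≤ ((A ×ˢ B).image fun p => c p.1 p.2).card}

namespace Stmt14Aux


/-- Validity of a coloring for the `(K_{s,st}, q)` problem. -/
def Valid (n s t : ℕ) (c : Fin n → Fin n → ℕ) : Prop :=
  ∀ A B : Finset (Fin n),
    (A.card = s ∧ B.card = s * t) ∨ (A.card = s * t ∧ B.card = s) →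
    s ^ 2 * t - t * (s - 1) + 1 ≤ ((A ×ˢ B).image fun p => c p.1 p.2).card

def rowFib (n : ℕ) (c : Fin n → Fin n → ℕ) (a : Fin n) (γ : ℕ) : Finset (Fin n) :=
  univ.filter fun b => c a b = γ

lemma arith1 {s t : ℕ} (hs : 2 ≤ s) (ht : 2 ≤ t) : t * (s - 1) + t = t * s := by
  have h : s - 1 + 1 = s := by omega
  calc t * (s - 1) + t = t * ((s - 1) + 1) := by ring
    _ = t * s := by rw [h]

lemma arith2 {s t : ℕ} (hs : 2 ≤ s) (ht : 2 ≤ t) : t * (s - 1) + 1 ≤ s ^ 2 * t := by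
  have h1 := arith1 hs ht
  have h2 : t * s ≤ t * s * s := Nat.le_mul_of_pos_right _ (by omega)
  have h3 : t * s * s = s ^ 2 * t := by ring
  omega

/-- Key deficiency lemma: in a valid coloring, for any `s × st` grid and any set `T` of
colors appearing in the grid, the total deficiency from colors of `T` is `< t(s-1)`. -/
lemma defect {n s t : ℕ} (hs : 2 ≤ s) (ht : 2 ≤ t)
    {c : Fin n → Fin n → ℕ} (hv : Valid n s t c)
    {A B : Finset (Fin n)} (hA : A.card = s) (hB : B.card = s * t)
    {T : Finset ℕ}
    (hT : ∀ γ ∈ T, ((A ×ˢ B).filter fun p => c p.1 p.2 = γ).Nonempty) :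
    ∑ γ ∈ T, (((A ×ˢ B).filter fun p => c p.1 p.2 = γ).card - 1) < t * (s - 1) := by
  classical
  have himg : s ^ 2 * t - t * (s - 1) + 1 ≤ ((A ×ˢ B).image fun p => c p.1 p.2).card :=
    hv A B (Or.inl ⟨hA, hB⟩)
  have hPcard : (A ×ˢ B).card = s ^ 2 * t := by
    rw [card_product, hA, hB]; ring
  have hfib : (A ×ˢ B).card
      = ∑ γ ∈ (A ×ˢ B).image (fun p => c p.1 p.2),
          ((A ×ˢ B).filter fun p => c p.1 p.2 = γ).card :=
    card_eq_sum_card_fiberwise (fun x hx => mem_image_of_mem _ hx)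
  have hTsub : T ⊆ (A ×ˢ B).image (fun p => c p.1 p.2) := by
    intro γ hγ
    obtain ⟨p, hp⟩ := hT γ hγ
    rw [mem_filter] at hp
    exact mem_image.mpr ⟨p, hp.1, hp.2⟩
  have hsplit :
      ∑ γ ∈ (A ×ˢ B).image (fun p => c p.1 p.2) \ T,
          ((A ×ˢ B).filter fun p => c p.1 p.2 = γ).card
        + ∑ γ ∈ T, ((A ×ˢ B).filter fun p => c p.1 p.2 = γ).card
      = ∑ γ ∈ (A ×ˢ B).image (fun p => c p.1 p.2),
          ((A ×ˢ B).filter fun p => c p.1 p.2 = γ).card :=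
    sum_sdiff hTsub
  have hone : ∀ γ ∈ (A ×ˢ B).image (fun p => c p.1 p.2) \ T,
      1 ≤ ((A ×ˢ B).filter fun p => c p.1 p.2 = γ).card := by
    intro γ hγ
    rw [mem_sdiff] at hγ
    obtain ⟨p, hp, hpe⟩ := mem_image.mp hγ.1
    exact card_pos.mpr ⟨p, mem_filter.mpr ⟨hp, hpe⟩⟩
  have hrest : ((A ×ˢ B).image (fun p => c p.1 p.2)).card - T.card
      ≤ ∑ γ ∈ (A ×ˢ B).image (fun p => c p.1 p.2) \ T,
          ((A ×ˢ B).filter fun p => c p.1 p.2 = γ).card := by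
    rw [← card_sdiff_of_subset hTsub]
    calc ((A ×ˢ B).image (fun p => c p.1 p.2) \ T).card
        = ∑ _γ ∈ (A ×ˢ B).image (fun p => c p.1 p.2) \ T, 1 := by simp
      _ ≤ _ := sum_le_sum hone
  have hTsum : ∑ γ ∈ T, ((A ×ˢ B).filter fun p => c p.1 p.2 = γ).card
      = (∑ γ ∈ T, (((A ×ˢ B).filter fun p => c p.1 p.2 = γ).card - 1)) + T.card := by
    have hpt : ∀ γ ∈ T, ((A ×ˢ B).filter fun p => c p.1 p.2 = γ).card
        = (((A ×ˢ B).filter fun p => c p.1 p.2 = γ).card - 1) + 1 := by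
      intro γ hγ
      have := card_pos.mpr (hT γ hγ)
      omega
    rw [sum_congr rfl hpt, sum_add_distrib, sum_const, smul_eq_mul, mul_one]
  have hcardle : T.card ≤ ((A ×ˢ B).image (fun p => c p.1 p.2)).card := card_le_card hTsub
  have harith := arith2 hs ht
  omega

/-- In a valid coloring, every row color degree is at most `t(s-1)`. -/
lemma rowdeg_le {n s t : ℕ} (hs : 2 ≤ s) (ht : 2 ≤ t) (hn : s * t ≤ n)
    {c : Fin n → Fin n → ℕ} (hv : Valid n s t c) (a : Fin n) (γ : ℕ) :
    (rowFib n c a γ).card ≤ t * (s - 1) := by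
  classical
  by_contra hcon
  push_neg at hcon
  have harith1 := arith1 hs ht
  have hts : t * s = s * t := Nat.mul_comm t s
  have hle : t * (s - 1) + 1 ≤ s * t := by omega
  obtain ⟨B₀, hB₀sub, hB₀card⟩ :=
    exists_subset_card_eq (s := rowFib n c a γ) (n := t * (s - 1) + 1) (by omega)
  obtain ⟨B, hBsub, hBcard⟩ := exists_superset_card_eq (s := B₀) (n := s * t)
      (by omega) (by simpa using hn)
  have hsn : s ≤ n := by
    have : s * 1 ≤ s * t := Nat.mul_le_mul_left s (by omega)
    omega
  obtain ⟨A', hA'sub, hA'card⟩ := exists_superset_card_eq (s := ({a} : Finset (Fin n)))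
      (n := s) (by simp; omega) (by simpa using hsn)
  have haA : a ∈ A' := hA'sub (mem_singleton_self a)
  have hinj : ∀ b ∈ B₀, (a, b) ∈ (A' ×ˢ B).filter fun p => c p.1 p.2 = γ := by
    intro b hb
    refine mem_filter.mpr ⟨mem_product.mpr ⟨haA, hBsub hb⟩, ?_⟩
    have := hB₀sub hb
    rw [rowFib, mem_filter] at this
    exact this.2
  have hcount : t * (s - 1) + 1 ≤ ((A' ×ˢ B).filter fun p => c p.1 p.2 = γ).card := by
    rw [← hB₀card]
    apply card_le_card_of_injOn (fun b => (a, b)) (fun b hb => hinj b hb)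
    intro x _ y _ h
    exact ((Prod.mk.injEq _ _ _ _).mp h).2
  have hdef := defect hs ht hv hA'card hBcard (T := ({γ} : Finset ℕ)) ?_
  · rw [sum_singleton] at hdef
    omega
  · intro γ' hγ'
    rw [mem_singleton] at hγ'
    subst hγ'
    exact card_pos.mp (by omega)

/-- In a valid coloring, any `t` distinct colors appear together in at most `s-1` rows. -/
lemma common_le {n s t : ℕ} (hs : 2 ≤ s) (ht : 2 ≤ t) (hn : s * t ≤ n)
    {c : Fin n → Fin n → ℕ} (hv : Valid n s t c)
    {T : Finset ℕ} (hTc : T.card = t) :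
    (univ.filter fun a : Fin n => ∀ γ ∈ T, 0 < (rowFib n c a γ).card).card ≤ s - 1 := by
  classical
  by_contra hcon
  push_neg at hcon
  obtain ⟨S, hSsub, hScard⟩ := exists_subset_card_eq
    (s := univ.filter fun a : Fin n => ∀ γ ∈ T, 0 < (rowFib n c a γ).card) (n := s) (by omega)
  have hst4 : 4 ≤ s * t := by
    calc (4:ℕ) = 2 * 2 := by norm_num
      _ ≤ s * t := Nat.mul_le_mul hs ht
  have hn0 : 0 < n := by omega
  have hwit : ∀ a ∈ S, ∀ γ ∈ T, ∃ b : Fin n, c a b = γ := by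
    intro a ha γ hγ
    have hmem := hSsub ha
    rw [mem_filter] at hmem
    obtain ⟨b, hb⟩ := card_pos.mp (hmem.2 γ hγ)
    rw [rowFib, mem_filter] at hb
    exact ⟨b, hb.2⟩
  have hwit' : ∀ (a : Fin n) (γ : ℕ), ∃ b : Fin n, (a ∈ S → γ ∈ T → c a b = γ) := by
    intro a γ
    by_cases ha : a ∈ S
    · by_cases hγ : γ ∈ T
      · obtain ⟨b, hb⟩ := hwit a ha γ hγ
        exact ⟨b, fun _ _ => hb⟩
      · exact ⟨⟨0, hn0⟩, fun _ h => absurd h hγ⟩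
    · exact ⟨⟨0, hn0⟩, fun h => absurd h ha⟩
  choose pick hpick using hwit'
  have hB₀card : ((T ×ˢ S).image (fun z => pick z.2 z.1)).card ≤ s * t := by
    calc ((T ×ˢ S).image (fun z => pick z.2 z.1)).card ≤ (T ×ˢ S).card := card_image_le
      _ = t * s := by rw [card_product, hTc, hScard]
      _ = s * t := Nat.mul_comm t s
  obtain ⟨B, hBsub, hBcard⟩ := exists_superset_card_eq hB₀card (by simpa using hn)
  have hfib : ∀ γ ∈ T, s ≤ ((S ×ˢ B).filter fun p => c p.1 p.2 = γ).card := by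
    intro γ hγ
    rw [← hScard]
    apply card_le_card_of_injOn (fun a => (a, pick a γ))
    · intro a ha
      refine mem_filter.mpr ⟨mem_product.mpr ⟨ha, hBsub ?_⟩, hpick a γ ha hγ⟩
      exact mem_image.mpr ⟨(γ, a), mem_product.mpr ⟨hγ, ha⟩, rfl⟩
    · intro x _ y _ h
      exact ((Prod.mk.injEq _ _ _ _).mp h).1
  have hdef := defect hs ht hv hScard hBcard (T := T) ?_
  · have hlow : ∀ γ ∈ T, s - 1 ≤ ((S ×ˢ B).filter fun p => c p.1 p.2 = γ).card - 1 := by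
      intro γ hγ
      have := hfib γ hγ
      omega
    have hbig : t * (s - 1) ≤ ∑ γ ∈ T, (((S ×ˢ B).filter fun p => c p.1 p.2 = γ).card - 1) := by
      calc t * (s - 1) = ∑ _γ ∈ T, (s - 1) := by rw [sum_const, hTc, smul_eq_mul]
        _ ≤ _ := sum_le_sum hlow
    omega
  · intro γ hγ
    have := hfib γ hγ
    exact card_pos.mp (by omega)

lemma pow_le_two_pow_descFactorial (x : ℕ) :
    ∀ j : ℕ, 2 * j ≤ x → x ^ j ≤ 2 ^ j * x.descFactorial j
  | 0, _ => by simp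
  | (j+1), h => by
    have ih := pow_le_two_pow_descFactorial x j (by omega)
    have h2 : x ≤ 2 * (x - j) := by omega
    calc x ^ (j + 1) = x ^ j * x := by ring
      _ ≤ (2 ^ j * x.descFactorial j) * (2 * (x - j)) := Nat.mul_le_mul ih h2
      _ = 2 ^ (j+1) * ((x - j) * x.descFactorial j) := by ring
      _ = 2 ^ (j+1) * x.descFactorial (j+1) := by rw [Nat.descFactorial_succ]

lemma pow_split (t x : ℕ) : x ^ t ≤ 2 ^ t * x.descFactorial t + (2 * t) ^ t := by
  rcases le_or_gt x (2 * t) with h | h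
  · have hle : x ^ t ≤ (2 * t) ^ t := Nat.pow_le_pow_left h t
    omega
  · have := pow_le_two_pow_descFactorial x t (by omega)
    omega


def Rw (n : ℕ) (c : Fin n → Fin n → ℕ) (γ : ℕ) : Finset (Fin n) :=
  univ.filter fun a => 0 < (rowFib n c a γ).card

def SpD (n k : ℕ) (c : Fin n → Fin n → ℕ) (p : Fin n × Fin n) : Finset ℕ :=
  (range k).filter fun γ => p.1 ∈ Rw n c γ ∧ p.2 ∈ Rw n c γ

def YD (n : ℕ) (c : Fin n → Fin n → ℕ) (T : Finset ℕ) : Finset (Fin n) :=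
  univ.filter fun a => ∀ γ ∈ T, a ∈ Rw n c γ

lemma mem_SpD {n k : ℕ} {c : Fin n → Fin n → ℕ} {p : Fin n × Fin n} {γ : ℕ} :
    γ ∈ SpD n k c p ↔ γ < k ∧ p.1 ∈ Rw n c γ ∧ p.2 ∈ Rw n c γ := by
  simp [SpD, mem_filter, mem_range]

lemma SpD_subset {n k : ℕ} {c : Fin n → Fin n → ℕ} {p : Fin n × Fin n} :
    SpD n k c p ⊆ range k := filter_subset _ _

lemma mem_YD {n : ℕ} {c : Fin n → Fin n → ℕ} {T : Finset ℕ} {a : Fin n} :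
    a ∈ YD n c T ↔ ∀ γ ∈ T, a ∈ Rw n c γ := by
  simp [YD, mem_filter]




set_option maxHeartbeats 1600000 in
/-- Master counting lemma. -/
lemma master {n s t : ℕ} (hs : 2 ≤ s) (ht : 2 ≤ t) (hn : s * t ≤ n)
    {k : ℕ} {c : Fin n → Fin n → ℕ} (hcol : ∀ a b, c a b < k) (hv : Valid n s t c) :
    n ^ (t + 1) ≤ (k * (8 * t * s ^ 2 * (t * (s - 1)) ^ 2)) ^ t := by
  classical
  set D := t * (s - 1) with hD
  set F := 8 * t * s ^ 2 * D ^ 2 with hF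
  have hD2 : 2 ≤ D := by
    have h1 : 1 ≤ s - 1 := by omega
    calc (2:ℕ) = 2 * 1 := by norm_num
      _ ≤ t * (s - 1) := Nat.mul_le_mul ht h1
  have hst4 : 4 ≤ s * t := by
    calc (4:ℕ) = 2 * 2 := by norm_num
      _ ≤ s * t := Nat.mul_le_mul hs ht
  have hn4 : 4 ≤ n := le_trans hst4 hn
  have hk1 : 1 ≤ k := by
    have := hcol ⟨0, by omega⟩ ⟨0, by omega⟩
    omega
  set W := ∑ γ ∈ range k, (Rw n c γ).card with hW
  set Q := ∑ γ ∈ range k, (Rw n c γ).card ^ 2 with hQ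
  set Lam := ∑ p ∈ (univ : Finset (Fin n)).offDiag, (SpD n k c p).card with hLam
  set N := ((univ : Finset (Fin n)).offDiag).card with hN
  -- cell counting
  have hcell : ((univ ×ˢ univ : Finset (Fin n × Fin n))).card = n * n := by
    rw [card_product]
    simp
  have hfibtot : ((univ ×ˢ univ : Finset (Fin n × Fin n))).card
      = ∑ γ ∈ range k, (((univ ×ˢ univ : Finset (Fin n × Fin n))).filter
          fun p => c p.1 p.2 = γ).card :=
    card_eq_sum_card_fiberwise (fun p _ => mem_range.mpr (hcol p.1 p.2))
  have hmrow : ∀ γ : ℕ, (((univ ×ˢ univ : Finset (Fin n × Fin n))).filter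
      fun p => c p.1 p.2 = γ).card = ∑ a : Fin n, (rowFib n c a γ).card := by
    intro γ
    rw [card_filter, Finset.sum_product]
    refine Finset.sum_congr rfl fun a _ => ?_
    rw [rowFib, card_filter]
  have hrowD : ∀ (a : Fin n) (γ : ℕ),
      (rowFib n c a γ).card ≤ if a ∈ Rw n c γ then D else 0 := by
    intro a γ
    by_cases h : a ∈ Rw n c γ
    · rw [if_pos h]
      exact rowdeg_le hs ht hn hv a γ
    · rw [if_neg h]
      rw [Rw, mem_filter] at h
      push_neg at h
      have := h (mem_univ a)
      omega
  have hmD : ∀ γ : ℕ, (∑ a : Fin n, (rowFib n c a γ).card) ≤ D * (Rw n c γ).card := by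
    intro γ
    calc ∑ a : Fin n, (rowFib n c a γ).card
        ≤ ∑ a : Fin n, (if a ∈ Rw n c γ then D else 0) := sum_le_sum (fun a _ => hrowD a γ)
      _ = ∑ _a ∈ univ ∩ Rw n c γ, D := Finset.sum_ite_mem _ _ _
      _ = ∑ _a ∈ Rw n c γ, D := by rw [univ_inter]
      _ = D * (Rw n c γ).card := by rw [sum_const, smul_eq_mul, Nat.mul_comm]
  have h1 : n * n ≤ D * W := by
    calc n * n
        = ∑ γ ∈ range k, (((univ ×ˢ univ : Finset (Fin n × Fin n))).filter
            fun p => c p.1 p.2 = γ).card := by rw [← hfibtot, hcell]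
      _ = ∑ γ ∈ range k, ∑ a : Fin n, (rowFib n c a γ).card :=
          sum_congr rfl fun γ _ => hmrow γ
      _ ≤ ∑ γ ∈ range k, D * (Rw n c γ).card := sum_le_sum (fun γ _ => hmD γ)
      _ = D * W := by rw [hW, mul_sum]
  have hRlem : ∀ γ : ℕ, (Rw n c γ).card ≤ ∑ a : Fin n, (rowFib n c a γ).card := by
    intro γ
    calc (Rw n c γ).card = ∑ _a ∈ Rw n c γ, 1 := by simp
      _ ≤ ∑ a ∈ Rw n c γ, (rowFib n c a γ).card := by
          refine sum_le_sum fun a ha => ?_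
          rw [Rw, mem_filter] at ha
          omega
      _ ≤ ∑ a : Fin n, (rowFib n c a γ).card :=
          sum_le_sum_of_subset (subset_univ _)
  have h2 : W ≤ n * n := by
    calc W ≤ ∑ γ ∈ range k, ∑ a : Fin n, (rowFib n c a γ).card :=
        sum_le_sum fun γ _ => hRlem γ
      _ = ∑ γ ∈ range k, (((univ ×ˢ univ : Finset (Fin n × Fin n))).filter
            fun p => c p.1 p.2 = γ).card := sum_congr rfl fun γ _ => (hmrow γ).symm
      _ = n * n := by rw [← hfibtot, hcell]
  -- Cauchy-Schwarz
  have hkR : (0:ℝ) < ((k:ℕ):ℝ) := by exact_mod_cast hk1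
  have h3 : W * W ≤ k * Q := by
    have hcs := pow_sum_div_card_le_sum_pow (s := range k)
        (f := fun γ => ((Rw n c γ).card : ℝ)) (fun γ _ => by positivity) 1
    rw [card_range] at hcs
    have h11 : (1 + 1 : ℕ) = 2 := rfl
    simp only [h11, pow_one] at hcs
    rw [div_le_iff₀ hkR] at hcs
    have hcast : ((W * W : ℕ) : ℝ) ≤ ((k * Q : ℕ) : ℝ) := by
      push_cast
      have hWR : ((W:ℕ):ℝ) = ∑ γ ∈ range k, (((Rw n c γ).card : ℕ) : ℝ) := by
        rw [hW]; push_cast; rfl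
      have hQR : ((Q:ℕ):ℝ) = ∑ γ ∈ range k, (((Rw n c γ).card : ℕ) : ℝ) ^ 2 := by
        rw [hQ]; push_cast; rfl
      rw [hWR, hQR]
      calc (∑ γ ∈ range k, (((Rw n c γ).card : ℕ) : ℝ))
            * (∑ γ ∈ range k, (((Rw n c γ).card : ℕ) : ℝ))
          = (∑ γ ∈ range k, (((Rw n c γ).card : ℕ) : ℝ)) ^ 2 := by ring
        _ ≤ (∑ γ ∈ range k, (((Rw n c γ).card : ℕ) : ℝ) ^ 2) * ((k:ℕ):ℝ) := hcs
        _ = ((k:ℕ):ℝ) * ∑ γ ∈ range k, (((Rw n c γ).card : ℕ) : ℝ) ^ 2 := by ring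
    exact_mod_cast hcast
  -- swap2 : Lam = ∑ over colors of offDiag cards
  have swap2 : Lam = ∑ γ ∈ range k, ((Rw n c γ).offDiag).card := by
    rw [hLam]
    have e1 : ∀ p ∈ (univ : Finset (Fin n)).offDiag, (SpD n k c p).card
        = ∑ γ ∈ range k, (if p.1 ∈ Rw n c γ ∧ p.2 ∈ Rw n c γ then 1 else 0) := by
      intro p _
      rw [SpD, card_filter]
    rw [sum_congr rfl e1, Finset.sum_comm]
    refine sum_congr rfl fun γ _ => ?_
    rw [← card_filter]
    congr 1
    ext p
    simp only [mem_filter, Finset.mem_offDiag, mem_univ, true_and]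
    tauto
  -- swap1
  have swap1 : ∑ p ∈ (univ : Finset (Fin n)).offDiag, ((SpD n k c p).card).choose t
      = ∑ T ∈ (range k).powersetCard t, ((YD n c T).offDiag).card := by
    have e1 : ∀ p ∈ (univ : Finset (Fin n)).offDiag, ((SpD n k c p).card).choose t
        = ∑ T ∈ (range k).powersetCard t, (if T ⊆ SpD n k c p then 1 else 0) := by
      intro p _
      rw [← card_powersetCard t (SpD n k c p), ← card_filter]
      congr 1
      ext T
      simp only [mem_powersetCard, mem_filter]
      constructor
      · rintro ⟨h1', h2'⟩
        exact ⟨⟨h1'.trans SpD_subset, h2'⟩, h1'⟩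
      · rintro ⟨⟨_, h2'⟩, h3'⟩
        exact ⟨h3', h2'⟩
    rw [sum_congr rfl e1, Finset.sum_comm]
    refine sum_congr rfl fun T hT => ?_
    rw [← card_filter]
    congr 1
    ext p
    rw [mem_powersetCard] at hT
    simp only [mem_filter, Finset.mem_offDiag, mem_univ, true_and, mem_YD]
    constructor
    · rintro ⟨hne, hsub⟩
      exact ⟨fun γ hγ => (mem_SpD.mp (hsub hγ)).2.1,
        fun γ hγ => (mem_SpD.mp (hsub hγ)).2.2, hne⟩
    · rintro ⟨h1', h2', hne⟩
      refine ⟨hne, fun γ hγ => mem_SpD.mpr ⟨?_, h1' γ hγ, h2' γ hγ⟩⟩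
      have := hT.1 hγ
      rwa [mem_range] at this
  -- per-T bound
  have hYle : ∀ T ∈ (range k).powersetCard t, ((YD n c T).offDiag).card ≤ s * s := by
    intro T hT
    rw [mem_powersetCard] at hT
    have hYeq : YD n c T
        = univ.filter fun a : Fin n => ∀ γ ∈ T, 0 < (rowFib n c a γ).card := by
      ext a
      rw [mem_YD, mem_filter]
      simp only [mem_univ, true_and]
      constructor
      · intro h γ hγ
        have := h γ hγ
        rw [Rw, mem_filter] at this
        exact this.2
      · intro h γ hγ
        rw [Rw, mem_filter]
        exact ⟨mem_univ a, h γ hγ⟩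
    have hYc : (YD n c T).card ≤ s - 1 := by
      rw [hYeq]
      exact common_le hs ht hn hv hT.2
    have hmul : (YD n c T).card * (YD n c T).card ≤ (s-1) * (s-1) := Nat.mul_le_mul hYc hYc
    have hss : (s-1) * (s-1) ≤ s * s := Nat.mul_le_mul (by omega) (by omega)
    calc ((YD n c T).offDiag).card
        = (YD n c T).card * (YD n c T).card - (YD n c T).card := offDiag_card _
      _ ≤ s * s := by omega
  have hSC : ∑ p ∈ (univ : Finset (Fin n)).offDiag, ((SpD n k c p).card).choose t
      ≤ k.choose t * (s * s) := by
    rw [swap1]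
    calc ∑ T ∈ (range k).powersetCard t, ((YD n c T).offDiag).card
        ≤ ∑ _T ∈ (range k).powersetCard t, s * s := sum_le_sum hYle
      _ = ((range k).powersetCard t).card * (s * s) := by rw [sum_const, smul_eq_mul]
      _ = k.choose t * (s * s) := by rw [card_powersetCard, card_range]
  -- SP bound
  have hSP : ∑ p ∈ (univ : Finset (Fin n)).offDiag, ((SpD n k c p).card) ^ t
      ≤ 2 ^ t * s ^ 2 * k ^ t + (2 * t) ^ t * N := by
    have hdesc : t.factorial * k.choose t ≤ k ^ t := by
      rw [← Nat.descFactorial_eq_factorial_mul_choose]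
      exact Nat.descFactorial_le_pow k t
    calc ∑ p ∈ (univ : Finset (Fin n)).offDiag, ((SpD n k c p).card) ^ t
        ≤ ∑ p ∈ (univ : Finset (Fin n)).offDiag,
            (2 ^ t * ((SpD n k c p).card).descFactorial t + (2*t)^t) :=
          sum_le_sum fun p _ => pow_split t _
      _ = (∑ p ∈ (univ : Finset (Fin n)).offDiag,
            2 ^ t * ((SpD n k c p).card).descFactorial t) + (2*t)^t * N := by
          rw [sum_add_distrib, sum_const, smul_eq_mul, hN, Nat.mul_comm]
      _ = (∑ p ∈ (univ : Finset (Fin n)).offDiag,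
            2 ^ t * (t.factorial * ((SpD n k c p).card).choose t)) + (2*t)^t * N := by
          congr 1
          exact sum_congr rfl fun p _ => by
            rw [Nat.descFactorial_eq_factorial_mul_choose]
      _ = 2 ^ t * (t.factorial * ∑ p ∈ (univ : Finset (Fin n)).offDiag,
            ((SpD n k c p).card).choose t) + (2*t)^t * N := by
          simp only [← mul_sum]
      _ ≤ 2 ^ t * (t.factorial * (k.choose t * (s * s))) + (2*t)^t * N :=
          Nat.add_le_add_right
            (Nat.mul_le_mul_left _ (Nat.mul_le_mul_left _ hSC)) _
      _ ≤ 2 ^ t * s ^ 2 * k ^ t + (2*t)^t * N := by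
          refine Nat.add_le_add_right ?_ _
          calc 2 ^ t * (t.factorial * (k.choose t * (s * s)))
              = 2 ^ t * ((t.factorial * k.choose t) * (s*s)) := by ring
            _ ≤ 2 ^ t * (k ^ t * (s*s)) :=
                Nat.mul_le_mul_left _ (Nat.mul_le_mul_right _ hdesc)
            _ = 2 ^ t * s ^ 2 * k ^ t := by ring
  -- N facts
  have hNval : N = n * n - n := by
    rw [hN, Finset.offDiag_card]
    simp
  have hNpos : 0 < N := by
    have : n * 2 ≤ n * n := Nat.mul_le_mul_left n (by omega)
    omega
  have h7 : N ≤ n * n := by omega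
  -- Hölder
  have h5 : Lam ^ t ≤ N ^ (t - 1) * (∑ p ∈ (univ : Finset (Fin n)).offDiag,
      ((SpD n k c p).card) ^ t) := by
    have hcs := pow_sum_div_card_le_sum_pow (s := (univ : Finset (Fin n)).offDiag)
        (f := fun p => (((SpD n k c p).card : ℕ) : ℝ)) (fun p _ => by positivity) (t - 1)
    have htt : t - 1 + 1 = t := by omega
    simp only [htt] at hcs
    rw [← hN] at hcs
    have hNR : (0:ℝ) < ((N:ℕ):ℝ) ^ (t-1) := by
      have : (0:ℝ) < ((N:ℕ):ℝ) := by exact_mod_cast hNpos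
      positivity
    rw [div_le_iff₀ hNR] at hcs
    have hcast : ((Lam ^ t : ℕ) : ℝ) ≤ ((N ^ (t-1) * (∑ p ∈ (univ : Finset (Fin n)).offDiag,
        ((SpD n k c p).card) ^ t) : ℕ) : ℝ) := by
      push_cast
      have hLR : ((Lam:ℕ):ℝ) = ∑ p ∈ (univ : Finset (Fin n)).offDiag,
          (((SpD n k c p).card : ℕ) : ℝ) := by
        rw [hLam]; push_cast; rfl
      rw [hLR]
      calc (∑ p ∈ (univ : Finset (Fin n)).offDiag, (((SpD n k c p).card : ℕ) : ℝ)) ^ t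
          ≤ (∑ p ∈ (univ : Finset (Fin n)).offDiag, (((SpD n k c p).card : ℕ) : ℝ) ^ t)
            * ((N:ℕ):ℝ) ^ (t-1) := hcs
        _ = ((N:ℕ):ℝ) ^ (t-1) * ∑ p ∈ (univ : Finset (Fin n)).offDiag,
            (((SpD n k c p).card : ℕ) : ℝ) ^ t := by ring
    exact_mod_cast hcast
  -- final arithmetic
  have hgoal : n ^ (t + 1) ≤ (k * F) ^ t := by
    have hcaseA : ∀ (hkF : n * n ≤ k * F), n ^ (t + 1) ≤ (k * F) ^ t := by
      intro hkF
      calc n ^ (t+1) ≤ n ^ (2*t) := Nat.pow_le_pow_right (by omega) (by omega)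
        _ = (n * n) ^ t := by rw [pow_mul, pow_two]
        _ ≤ (k * F) ^ t := Nat.pow_le_pow_left hkF t
    rcases le_or_gt (n * n) (2 * D ^ 2 * k) with hcase | hcase
    · refine hcaseA ?_
      calc n * n ≤ 2 * D ^ 2 * k := hcase
        _ ≤ F * k := by
            refine Nat.mul_le_mul_right k ?_
            rw [hF]
            have h8 : 2 ≤ 8 * t * s ^ 2 := by nlinarith
            calc 2 * D ^ 2 ≤ (8 * t * s ^ 2) * D ^ 2 := Nat.mul_le_mul_right _ h8
              _ = 8 * t * s ^ 2 * D ^ 2 := by ring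
        _ = k * F := Nat.mul_comm F k
    · -- hard case
      have hB4 : n ^ 4 ≤ 2 * D ^ 2 * k * Lam := by
        have hQLW : Q = Lam + W := by
          rw [swap2, hQ, hW, ← sum_add_distrib]
          refine sum_congr rfl fun γ _ => ?_
          rw [Finset.offDiag_card]
          have hsqr : (Rw n c γ).card ^ 2 = (Rw n c γ).card * (Rw n c γ).card := sq _
          have hrle : (Rw n c γ).card ≤ (Rw n c γ).card * (Rw n c γ).card := by
            rcases Nat.eq_zero_or_pos (Rw n c γ).card with h0 | h0
            · omega
            · exact Nat.le_mul_of_pos_left _ h0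
          omega
        have key : (n*n)*(n*n) ≤ D^2*k*Lam + D^2*k*(n*n) := by
          calc (n*n)*(n*n) ≤ (D*W)*(D*W) := Nat.mul_le_mul h1 h1
            _ = D^2*(W*W) := by ring
            _ ≤ D^2*(k*Q) := Nat.mul_le_mul_left _ h3
            _ = D^2*k*Lam + D^2*k*W := by rw [hQLW]; ring
            _ ≤ D^2*k*Lam + D^2*k*(n*n) :=
                Nat.add_le_add_left (Nat.mul_le_mul_left _ h2) _
        have e6 : (2*D^2*k)*(n*n) ≤ (n*n)*(n*n) := Nat.mul_le_mul_right _ (le_of_lt hcase)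
        have e7 : (2*D^2*k)*(n*n) = 2*(D^2*k*(n*n)) := by ring
        have e8 : 2*D^2*k*Lam = 2*(D^2*k*Lam) := by ring
        have e9 : n^4 = (n*n)*(n*n) := by ring
        omega
      have hBt3 : n ^ (4*t) ≤ (2*D^2*k)^t * (n*n)^(t-1) * (2^t*s^2*k^t)
          + (2*D^2*k)^t * ((n*n)^(t-1)*(n*n)) * (2*t)^t := by
        have hBt2 : n ^ (4*t) ≤ (2*D^2*k)^t * (N^(t-1) * (2^t*s^2*k^t + (2*t)^t*N)) := by
          calc n^(4*t) = (n^4)^t := by rw [← pow_mul]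
            _ ≤ (2*D^2*k*Lam)^t := Nat.pow_le_pow_left hB4 t
            _ = (2*D^2*k)^t * Lam^t := by rw [mul_pow]
            _ ≤ (2*D^2*k)^t * (N^(t-1) * (∑ p ∈ (univ : Finset (Fin n)).offDiag,
                ((SpD n k c p).card) ^ t)) := Nat.mul_le_mul_left _ h5
            _ ≤ (2*D^2*k)^t * (N^(t-1) * (2^t*s^2*k^t + (2*t)^t*N)) :=
                Nat.mul_le_mul_left _ (Nat.mul_le_mul_left _ hSP)
        refine hBt2.trans ?_
        have expand : (2*D^2*k)^t * (N^(t-1) * (2^t*s^2*k^t + (2*t)^t*N))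
            = (2*D^2*k)^t * N^(t-1) * (2^t*s^2*k^t)
              + (2*D^2*k)^t * (N^(t-1)*N) * (2*t)^t := by ring
        rw [expand]
        gcongr <;> exact h7
      rcases le_or_gt ((2*D^2*k)^t * ((n*n)^(t-1)*(n*n)) * (2*t)^t)
          ((2*D^2*k)^t * (n*n)^(t-1) * (2^t*s^2*k^t)) with hcc | hcc
      · -- B1 : first term dominates
        have hkey : n ^ (2*t+2) ≤ 2 * (2*D^2*k)^t * (2^t*s^2*k^t) := by
          have hnn : (n*n)^(t-1) = n^(2*t-2) := by
            have h2' : (n*n) = n^2 := (pow_two n).symm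
            rw [h2', ← pow_mul]
            congr 1
            omega
          have hc2 : n^(2*t+2) * n^(2*t-2)
              ≤ (2 * (2*D^2*k)^t * (2^t*s^2*k^t)) * n^(2*t-2) := by
            have hpw : n^(2*t+2) * n^(2*t-2) = n^(4*t) := by
              rw [← pow_add]
              congr 1
              omega
            have hc3 : (2 * (2*D^2*k)^t * (2^t*s^2*k^t)) * n^(2*t-2)
                = 2 * ((2*D^2*k)^t * (n*n)^(t-1) * (2^t*s^2*k^t)) := by
              rw [hnn]; ring
            rw [hpw, hc3]
            omega
          exact Nat.le_of_mul_le_mul_right hc2 (pow_pos (by omega) _)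
        have hFt : 2 * (2*D^2*k)^t * (2^t*s^2*k^t) ≤ (k*F)^(2*t) := by
          have h1s : 1 ≤ s^2 := Nat.one_le_pow _ _ (by omega)
          have h1D : 1 ≤ D^2 := Nat.one_le_pow _ _ (by omega)
          have hc1 : 2*D^2*2 ≤ F := by
            rw [hF]
            have h4 : (4:ℕ) ≤ 8*t*s^2 := by
              calc (4:ℕ) ≤ 8*2*1 := by norm_num
                _ ≤ 8*t*s^2 := Nat.mul_le_mul (Nat.mul_le_mul (le_refl 8) ht) h1s
            calc 2*D^2*2 = 4 * D^2 := by ring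
              _ ≤ (8*t*s^2) * D^2 := Nat.mul_le_mul_right _ h4
              _ = 8*t*s^2*D^2 := by ring
          have hc2 : 2*s^2 ≤ F := by
            rw [hF]
            calc 2*s^2 = 2*s^2*1 := by ring
              _ ≤ 8*t*s^2*D^2 :=
                  Nat.mul_le_mul (Nat.mul_le_mul (by omega : (2:ℕ) ≤ 8*t) (le_refl (s^2))) h1D
              _ = 8*t*s^2*D^2 := by ring
          have hc1' : (2*D^2*2)^t ≤ F^t := Nat.pow_le_pow_left hc1 t
          have hc2' : 2*s^2 ≤ F^t :=
            le_trans hc2 (Nat.le_self_pow (show t ≠ 0 by omega) F)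
          have e1 : (2*D^2*2)^t = (2*D^2)^t * 2^t := mul_pow _ _ _
          have e2 : (2*D^2*k)^t = (2*D^2)^t * k^t := mul_pow _ _ _
          have hA1 : 2 * (2*D^2*k)^t * (2^t*s^2*k^t)
              = (2*s^2) * ((2*D^2*2)^t * (k^t * k^t)) := by
            rw [e1, e2]; ring
          have e3 : (k*F)^(2*t) = (k*F)^t * (k*F)^t := by rw [two_mul, pow_add]
          have e4 : (k*F)^t = k^t * F^t := mul_pow _ _ _
          have hA2 : (k*F)^(2*t) = (F^t * F^t) * (k^t * k^t) := by rw [e3, e4]; ring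
          rw [hA1, hA2]
          calc (2*s^2) * ((2*D^2*2)^t * (k^t * k^t))
              ≤ F^t * ((2*D^2*2)^t * (k^t*k^t)) := Nat.mul_le_mul_right _ hc2'
            _ ≤ F^t * (F^t * (k^t*k^t)) :=
                Nat.mul_le_mul_left _ (Nat.mul_le_mul_right _ hc1')
            _ = (F^t * F^t) * (k^t * k^t) := by ring
        have hsq : (n^(t+1))^2 ≤ ((k*F)^t)^2 := by
          have l1 : (n^(t+1))^2 = n^(2*t+2) := by
            rw [← pow_mul]; congr 1; ring
          have l2 : ((k*F)^t)^2 = (k*F)^(2*t) := by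
            rw [← pow_mul]; congr 1; ring
          rw [l1, l2]
          exact le_trans hkey hFt
        exact (Nat.pow_le_pow_iff_left (by norm_num : (2:ℕ) ≠ 0)).mp hsq
      · -- B2 : second term dominates
        have hnn2 : (n*n)^(t-1)*(n*n) = (n*n)^t := by
          rw [← pow_succ]
          congr 1
          omega
        have hkey : (n*n) ^ t ≤ 2 * (2*D^2*k)^t * (2*t)^t := by
          have hpw : (n*n)^t * (n*n)^t = n^(4*t) := by
            calc (n*n)^t * (n*n)^t = ((n*n)^t)^2 := (sq _).symm
              _ = (n*n)^(t*2) := by rw [← pow_mul]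
              _ = (n^2)^(t*2) := by rw [← pow_two]
              _ = n^(2*(t*2)) := by rw [← pow_mul]
              _ = n^(4*t) := by congr 1; ring
          have hc2 : (n*n)^t * (n*n)^t ≤ (2 * (2*D^2*k)^t * (2*t)^t) * (n*n)^t := by
            have hup : n^(4*t) ≤ 2 * ((2*D^2*k)^t * ((n*n)^(t-1)*(n*n)) * (2*t)^t) := by
              omega
            rw [hnn2] at hup
            calc (n*n)^t * (n*n)^t = n^(4*t) := hpw
              _ ≤ 2 * ((2*D^2*k)^t * (n*n)^t * (2*t)^t) := hup
              _ = (2 * (2*D^2*k)^t * (2*t)^t) * (n*n)^t := by ring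
          exact Nat.le_of_mul_le_mul_right hc2 (pow_pos (by omega : 0 < n*n) _)
        have hc8 : 2 * (2*D^2*k)^t * (2*t)^t ≤ (8*t*D^2*k)^t := by
          have h2t : (2:ℕ) ≤ 2^t := by
            calc (2:ℕ) = 2^1 := (pow_one 2).symm
              _ ≤ 2^t := Nat.pow_le_pow_right (by omega) (by omega)
          calc 2 * (2*D^2*k)^t * (2*t)^t
              ≤ 2^t * (2*D^2*k)^t * (2*t)^t :=
                Nat.mul_le_mul_right _ (Nat.mul_le_mul_right _ h2t)
            _ = (8*t*D^2*k)^t := by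
                rw [← mul_pow, ← mul_pow]
                congr 1
                ring
        have hnk : n*n ≤ 8*t*D^2*k := by
          have hcmp : (n*n)^t ≤ (8*t*D^2*k)^t := le_trans hkey hc8
          exact (Nat.pow_le_pow_iff_left (show t ≠ 0 by omega)).mp hcmp
        refine hcaseA ?_
        calc n*n ≤ 8*t*D^2*k := hnk
          _ ≤ F*k := by
              refine Nat.mul_le_mul_right _ ?_
              rw [hF]
              have h1s : 1 ≤ s^2 := Nat.one_le_pow _ _ (by omega)
              nlinarith
          _ = k*F := Nat.mul_comm _ _
  exact hgoal


end Stmt14Aux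

/-- For `s, t ≥ 2`, `r(K_{n,n}, K_{s,st}, s²t - t(s-1) + 1) = Ω(n^{1 + 1/t})`. -/
theorem stmt_14 (s t : ℕ) (hs : 2 ≤ s) (ht : 2 ≤ t) :
    ∃ c : ℝ, 0 < c ∧ ∃ n₀ : ℕ, ∀ n : ℕ, n₀ ≤ n →
      c * (n : ℝ) ^ ((1 : ℝ) + 1 / (t : ℝ)) ≤
        (rBip n s (s * t) (s ^ 2 * t - t * (s - 1) + 1) : ℝ) := by
  classical
  have htpos : 0 < t := by omega
  have hX1 : 1 ≤ t * (s - 1) := Nat.mul_pos (by omega) (by omega)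
  have hFpos : 0 < 8 * t * s ^ 2 * (t * (s - 1)) ^ 2 := by
    have h2 : 0 < s ^ 2 := pow_pos (by omega) 2
    have h3 : 0 < (t * (s - 1)) ^ 2 := pow_pos hX1 2
    have h4 : 0 < 8 * t := by omega
    exact Nat.mul_pos (Nat.mul_pos h4 h2) h3
  have hFR : (0:ℝ) < ((8 * t * s ^ 2 * (t * (s - 1)) ^ 2 : ℕ) : ℝ) := by
    exact_mod_cast hFpos
  refine ⟨((8 * t * s ^ 2 * (t * (s - 1)) ^ 2 : ℕ) : ℝ)⁻¹, by positivity, s * t,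
    fun n hn => ?_⟩
  have hst4 : 4 ≤ s * t := by
    calc (4:ℕ) = 2 * 2 := by norm_num
      _ ≤ s * t := Nat.mul_le_mul hs ht
  have hn4 : 4 ≤ n := le_trans hst4 hn
  -- nonemptiness of the defining set
  have hne : {k : ℕ | ∃ c : Fin n → Fin n → ℕ,
      (∀ a b, c a b < k) ∧
      ∀ A B : Finset (Fin n),
        (A.card = s ∧ B.card = s * t) ∨ (A.card = s * t ∧ B.card = s) →
        s ^ 2 * t - t * (s - 1) + 1 ≤ ((A ×ˢ B).image fun p => c p.1 p.2).card}.Nonempty := by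
    refine ⟨n * n, fun a b => (b : ℕ) + (a : ℕ) * n, fun a b => ?_, fun A B hAB => ?_⟩
    · have h2 : (a:ℕ) * n ≤ (n-1) * n :=
        Nat.mul_le_mul_right n (by have := a.isLt; omega)
      have h3 : n + (n-1) * n = n * n := by
        rw [Nat.sub_one_mul]
        have hnn : n ≤ n * n := Nat.le_mul_of_pos_left n (by omega)
        omega
      calc (b:ℕ) + (a:ℕ) * n < n + (a:ℕ) * n := Nat.add_lt_add_right b.isLt _
        _ ≤ n + (n-1) * n := Nat.add_le_add_left h2 n
        _ = n * n := h3
    · have hinj : Set.InjOn (fun p : Fin n × Fin n => ((p.2 : ℕ) + (p.1 : ℕ) * n))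
          ↑(A ×ˢ B) := by
        intro p _ p' _ hpe
        simp only at hpe
        have h2 : (p.2 : ℕ) = (p'.2 : ℕ) := by
          have hmod := congrArg (· % n) hpe
          simpa [Nat.add_mul_mod_self_right, Nat.mod_eq_of_lt p.2.isLt,
            Nat.mod_eq_of_lt p'.2.isLt] using hmod
        have h1 : (p.1 : ℕ) = (p'.1 : ℕ) := by
          have hmul : (p.1 : ℕ) * n = (p'.1 : ℕ) * n := by omega
          exact Nat.eq_of_mul_eq_mul_right (by omega) hmul
        exact Prod.ext (Fin.ext h1) (Fin.ext h2)
      rw [card_image_of_injOn hinj, card_product]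
      have harith := Stmt14Aux.arith2 hs ht
      obtain ⟨X, hX⟩ : ∃ X, X = t * (s - 1) := ⟨_, rfl⟩
      obtain ⟨Y, hY⟩ : ∃ Y, Y = s ^ 2 * t := ⟨_, rfl⟩
      rw [← hX, ← hY] at harith
      rw [← hX] at hX1
      rcases hAB with ⟨h1, h2⟩ | ⟨h1, h2⟩ <;> rw [h1, h2]
      · have he : s * (s * t) = s ^ 2 * t := by ring
        rw [he, ← hX, ← hY]
        omega
      · have he : (s * t) * s = s ^ 2 * t := by ring
        rw [he, ← hX, ← hY]
        omega
  -- obtain the optimal coloring on the rBip value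
  have hmem : ∃ co : Fin n → Fin n → ℕ,
      (∀ a b, co a b < rBip n s (s * t) (s ^ 2 * t - t * (s - 1) + 1)) ∧
      ∀ A B : Finset (Fin n),
        (A.card = s ∧ B.card = s * t) ∨ (A.card = s * t ∧ B.card = s) →
        s ^ 2 * t - t * (s - 1) + 1 ≤ ((A ×ˢ B).image fun p => co p.1 p.2).card :=
    Nat.sInf_mem hne
  obtain ⟨co, hcol, hvv⟩ := hmem
  have hvalid : Stmt14Aux.Valid n s t co := fun A B h => hvv A B h
  have hmaster : n ^ (t + 1)
      ≤ (rBip n s (s * t) (s ^ 2 * t - t * (s - 1) + 1)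
          * (8 * t * s ^ 2 * (t * (s - 1)) ^ 2)) ^ t :=
    Stmt14Aux.master hs ht hn hcol hvalid
  -- make everything opaque
  obtain ⟨K, hK⟩ : ∃ K, K = rBip n s (s * t) (s ^ 2 * t - t * (s - 1) + 1) := ⟨_, rfl⟩
  obtain ⟨F0, hF0⟩ : ∃ F0, F0 = 8 * t * s ^ 2 * (t * (s - 1)) ^ 2 := ⟨_, rfl⟩
  rw [← hK, ← hF0] at hmaster
  rw [← hF0] at hFR
  rw [← hK, ← hF0]
  -- real algebra
  have ht0 : (t:ℝ) ≠ 0 := by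
    have h : (0:ℝ) < (t:ℝ) := by exact_mod_cast htpos
    linarith
  have hxnn : (0:ℝ) ≤ (n:ℝ) := Nat.cast_nonneg n
  have hpow : (((n : ℝ)) ^ ((1:ℝ) + 1/(t:ℝ))) ^ t = ((n ^ (t+1) : ℕ) : ℝ) := by
    rw [← Real.rpow_natCast ((n:ℝ) ^ ((1:ℝ) + 1/(t:ℝ))) t, ← Real.rpow_mul hxnn]
    have he : ((1:ℝ) + 1/(t:ℝ)) * ((t:ℕ):ℝ) = (((t+1 : ℕ)):ℝ) := by
      push_cast
      field_simp
    rw [he, Real.rpow_natCast]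
    exact (Nat.cast_pow n (t+1)).symm
  have hcast : ((n : ℝ)) ^ ((1:ℝ) + 1/(t:ℝ)) ≤ ((K * F0 : ℕ) : ℝ) := by
    have hle : (((n:ℝ)) ^ ((1:ℝ) + 1/(t:ℝ))) ^ t ≤ (((K * F0 : ℕ) : ℝ)) ^ t := by
      rw [hpow]
      calc ((n ^ (t+1) : ℕ) : ℝ) ≤ (((K * F0)^t : ℕ) : ℝ) := by exact_mod_cast hmaster
        _ = (((K * F0 : ℕ) : ℝ)) ^ t := Nat.cast_pow _ _
    exact le_of_pow_le_pow_left₀ htpos.ne' (by positivity) hle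
  rw [Nat.cast_mul] at hcast
  calc ((F0 : ℕ) : ℝ)⁻¹ * (n:ℝ) ^ ((1:ℝ) + 1/(t:ℝ))
      ≤ ((F0 : ℕ) : ℝ)⁻¹ * ((K:ℝ) * (F0:ℝ)) := by
        refine mul_le_mul_of_nonneg_left hcast ?_
        positivity
    _ = (K : ℝ) := by
        rw [mul_comm (K:ℝ), ← mul_assoc, inv_mul_cancel₀ hFR.ne', one_mul]
end

section
/- For any integer p ≥ 2, there exist a constant c > 0 and a natural number n₀ such that for all n ≥ n₀, r(K_{n,n}, K_{p,p}, p² - 2p + 2) ≥ c·n^{1 - 1/p}. -/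
/-!
Fix `d` with `2n < d^p`, so `d ≈ 2 n^{1/p}`. If a colouring of `K_{n,n}` used fewer than
`n / (2d)` colours, some colour class would have more than `2dn` edges, and deleting vertices of
small degree leaves a nonempty subgraph of minimum degree greater than `d`. Breadth-first search
from a vertex of this subgraph cannot grow by a factor `d` for `p` levels, since there are fewer
than `d^p` vertices. So some vertex within distance `p` has two neighbours one level closer to the
root, and the geodesics to them close up to a closed walk of length at most `2p`. Its vertices,
at most `p` on each side, span at least as many edges as there are vertices. Adding neighbours one
at a time keeps this, and ends with `p + p` vertices spanning `2p` edges of one colour, i.e. a copy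
of `K_{p,p}` with at most `p² - 2p + 1` colours.
-/

open Finset

namespace Finset

lemma card_filter_eq_true_add_card_filter_eq_false {V : Type*} (κ : V → Bool) (S : Finset V) :
    #{x ∈ S | κ x = true} + #{x ∈ S | κ x = false} = #S := by
  simpa using card_filter_add_card_filter_not (s := S) (fun x => κ x = true)

lemma card_toLeft_eq_card_filter_isLeft {α β : Type*} (T : Finset (α ⊕ β)) :
    #T.toLeft = #{x ∈ T | x.isLeft = true} := by
  rw [← card_map .inl]
  congr 1
  ext (a | b) <;> simp

lemma card_toRight_eq_card_filter_isLeft_eq_false {α β : Type*} (T : Finset (α ⊕ β)) :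
    #T.toRight = #{x ∈ T | x.isLeft = false} := by
  rw [← card_map .inr]
  congr 1
  ext (a | b) <;> simp

lemma card_image_add_card_le_of_forall_eq {ι κ : Type*} [DecidableEq ι] [DecidableEq κ]
    {s M : Finset ι} {f : ι → κ} {y : κ} (hM : M ⊆ s) (hf : ∀ x ∈ M, f x = y) :
    #(s.image f) + #M ≤ #s + 1 := by
  have : s.image f ⊆ insert y ((s \ M).image f) := by
    intro z hz
    obtain ⟨x, hx, rfl⟩ := mem_image.mp hz
    by_cases hxM : x ∈ M
    · rw [hf x hxM]; exact mem_insert_self _ _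
    · exact mem_insert_of_mem (mem_image_of_mem f (mem_sdiff.mpr ⟨hx, hxM⟩))
  have h1 := (card_le_card this).trans (card_insert_le _ _)
  have h2 := card_image_le (s := s \ M) (f := f)
  have h3 := card_sdiff_add_card_eq_card hM
  omega

section Fibers

variable {ι γ δ : Type*} [DecidableEq γ] [DecidableEq δ] {f : ι → γ} {g : ι → δ} {d : ℕ}

lemma lt_card_filter_ne_of_card_fiber_le {E : Finset ι}
    (hE : d * (#(E.image f) + #(E.image g)) < #E) {e : ι} (he : e ∈ E)
    (hfib : #{e' ∈ E | f e' = f e} ≤ d) :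
    d * (#({e' ∈ E | f e' ≠ f e}.image f) + #({e' ∈ E | f e' ≠ f e}.image g)) <
      #{e' ∈ E | f e' ≠ f e} := by
  have hf : #({e' ∈ E | f e' ≠ f e}.image f) + 1 ≤ #(E.image f) := by
    have : {e' ∈ E | f e' ≠ f e}.image f ⊆ (E.image f).erase (f e) := by
      intro y hy
      obtain ⟨e', he', rfl⟩ := mem_image.mp hy
      obtain ⟨he', hne⟩ := mem_filter.mp he'
      exact mem_erase.mpr ⟨hne, mem_image_of_mem f he'⟩
    have := card_le_card this
    rw [card_erase_of_mem (mem_image_of_mem f he)] at this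
    have := card_pos.mpr ⟨f e, mem_image_of_mem f he⟩
    omega
  have hg : #({e' ∈ E | f e' ≠ f e}.image g) ≤ #(E.image g) :=
    card_le_card (image_subset_image (filter_subset _ _))
  have hsplit : #{e' ∈ E | f e' = f e} + #{e' ∈ E | f e' ≠ f e} = #E :=
    card_filter_add_card_filter_not _
  have hmul := Nat.mul_le_mul_left d (Nat.add_le_add hf hg)
  rw [add_right_comm, mul_add, mul_one] at hmul
  omega

/-- Take a smallest subset satisfying the inequality: removing a fiber of size at most `d` would
preserve it. -/
theorem exists_subset_forall_lt_card_fiber (E₀ : Finset ι)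
    (h : d * (#(E₀.image f) + #(E₀.image g)) < #E₀) :
    ∃ E ⊆ E₀, E.Nonempty ∧
      ∀ e ∈ E, d < #{e' ∈ E | f e' = f e} ∧ d < #{e' ∈ E | g e' = g e} := by
  classical
  obtain ⟨E, hE, hmin⟩ := exists_min_image
    (E₀.powerset.filter fun E => d * (#(E.image f) + #(E.image g)) < #E) card
    ⟨E₀, mem_filter.mpr ⟨mem_powerset_self E₀, h⟩⟩
  obtain ⟨hEE₀, hdense⟩ := mem_filter.mp hE
  rw [mem_powerset] at hEE₀
  have hsmaller : ∀ E' ⊆ E, d * (#(E'.image f) + #(E'.image g)) < #E' → #E ≤ #E' :=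
    fun E' hE' h' => hmin E' (mem_filter.mpr ⟨mem_powerset.mpr (hE'.trans hEE₀), h'⟩)
  refine ⟨E, hEE₀, card_pos.mp (by omega), fun e he => ⟨?_, ?_⟩⟩
  · by_contra! hfib
    have := hsmaller _ (filter_subset _ _) (lt_card_filter_ne_of_card_fiber_le hdense he hfib)
    exact this.not_gt (card_lt_card (filter_ssubset.mpr ⟨e, he, not_not.mpr rfl⟩))
  · by_contra! hfib
    have := hsmaller _ (filter_subset _ _) (by
      rw [add_comm]
      exact lt_card_filter_ne_of_card_fiber_le (g := f) (by rwa [add_comm]) he hfib)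
    exact this.not_gt (card_lt_card (filter_ssubset.mpr ⟨e, he, not_not.mpr rfl⟩))

end Fibers

end Finset

namespace SimpleGraph

variable {V : Type*} {G : SimpleGraph V} {r u v : V}

lemma Coloring.even_dist_iff_congr (κ : G.Coloring Bool) (h : G.Reachable r v) :
    Even (G.dist r v) ↔ (κ r ↔ κ v) := by
  obtain ⟨p, hp⟩ := h.exists_walk_length_eq_dist
  exact hp ▸ κ.even_length_iff_congr p

lemma Coloring.dist_ne_of_adj (κ : G.Coloring Bool) (hu : G.Reachable r u) (huv : G.Adj u v) :
    G.dist r u ≠ G.dist r v := by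
  intro h
  have hu' := κ.even_dist_iff_congr hu
  have hv' := κ.even_dist_iff_congr (hu.trans huv.reachable)
  have := κ.valid huv
  rw [h, hv'] at hu'
  revert hu' this
  cases κ r <;> cases κ u <;> cases κ v <;> simp

lemma exists_adj_dist_add_one (h : 0 < G.dist r v) :
    ∃ u, G.Adj u v ∧ G.dist r u + 1 = G.dist r v := by
  obtain ⟨p, hp⟩ := (Reachable.of_dist_ne_zero h.ne').exists_walk_length_eq_dist
  cases hq : p.reverse with
  | nil => simp at h
  | @cons _ u _ hvu q =>
    refine ⟨u, hvu.symm, le_antisymm ?_ ?_⟩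
    · have hlen : p.length = q.length + 1 := by
        rw [← Walk.length_reverse, hq, Walk.length_cons]
      have := G.dist_le q.reverse
      rw [Walk.length_reverse] at this
      omega
    · have := hvu.symm.reachable.dist_triangle_right r
      rwa [dist_eq_one_iff_adj.mpr hvu.symm] at this

lemma exists_geodesic (hv : G.Reachable r v) :
    ∃ f : ℕ → V, f 0 = r ∧ f (G.dist r v) = v ∧ (∀ m ≤ G.dist r v, G.dist r (f m) = m) ∧
      ∀ m < G.dist r v, G.Adj (f m) (f (m + 1)) := by
  generalize hj : G.dist r v = j
  induction j generalizing v with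
  | zero =>
    have : r = v := ((dist_eq_zero_iff_eq_or_not_reachable).mp hj).resolve_right (· hv)
    exact ⟨fun _ => r, rfl, this, fun m hm => by simp [Nat.le_zero.mp hm], by simp⟩
  | succ j ih =>
    obtain ⟨u, huv, hu⟩ := exists_adj_dist_add_one (G := G) (r := r) (v := v) (by omega)
    obtain ⟨g, hg0, hgj, hgd, hga⟩ := ih (hv.trans huv.symm.reachable) (by omega)
    refine ⟨fun m => if m = j + 1 then v else g m, by simpa using hg0, by simp, ?_, ?_⟩
    · intro m hm
      dsimp only
      split_ifs with h
      · omega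
      · exact hgd m (by omega)
    · intro m hm
      by_cases h : m = j
      · subst h; simpa [hgj] using huv
      · simpa [h, show m ≠ j + 1 by omega] using hga m (by omega)

structure IsGeodesicCycle (G : SimpleGraph V) (r : V) (ℓ : ℕ) (c : ℕ → V) : Prop where
  pos : 0 < ℓ
  apply_zero : c 0 = r
  apply_two_mul : c (2 * ℓ) = r
  adj : ∀ m < 2 * ℓ, G.Adj (c m) (c (m + 1))
  dist_eq : ∀ m ≤ 2 * ℓ, G.dist r (c m) = min m (2 * ℓ - m)

/-- The closed walk runs along a geodesic from `r` to `u`, through `v`, and back along a geodesic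
from `u'` to `r`. -/
lemma exists_isGeodesicCycle {u' : V} (huv : G.Adj u v) (hu'v : G.Adj u' v) (hne : u ≠ u')
    (hu : G.dist r u + 1 = G.dist r v) (hu' : G.dist r u' + 1 = G.dist r v) :
    ∃ c : ℕ → V, G.IsGeodesicCycle r (G.dist r v) c ∧
      c (G.dist r v - 1) ≠ c (G.dist r v + 1) := by
  have hvr : G.Reachable r v := Reachable.of_dist_ne_zero (by omega)
  obtain ⟨f, hf0, hfu, hfd, hfa⟩ := exists_geodesic (hvr.trans huv.symm.reachable)
  obtain ⟨f', hf0', hfu', hfd', hfa'⟩ := exists_geodesic (hvr.trans hu'v.symm.reachable)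
  set i := G.dist r u
  have hi' : G.dist r u' = i := by omega
  rw [hi'] at hfu' hfd' hfa'
  rw [← hu]
  refine ⟨fun m => if m ≤ i then f m else if m = i + 1 then v else f' (2 * i + 2 - m),
    ⟨by omega, by simpa using hf0, ?_, ?_, ?_⟩, ?_⟩
  · simpa [show ¬ 2 * (i + 1) ≤ i by omega, show 2 * (i + 1) ≠ i + 1 by omega,
      show 2 * i + 2 - 2 * (i + 1) = 0 by omega] using hf0'
  · intro m hm
    split_ifs <;> try omega
    · exact hfa m (by omega)
    · rw [show m = i by omega, hfu]; exact huv
    · rw [show 2 * i + 2 - (m + 1) = i by omega, hfu']; exact hu'v.symm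
    · rw [show 2 * i + 2 - m = 2 * i + 2 - (m + 1) + 1 by omega]
      exact (hfa' _ (by omega)).symm
  · intro m hm
    split_ifs with h1 h2
    · rw [hfd m h1]; omega
    · rw [h2, ← hu]; omega
    · rw [hfd' _ (by omega)]; omega
  · simpa [show ¬ i + 1 + 1 ≤ i by omega, show 2 * i - i = i by omega, hfu, hfu'] using hne

namespace IsGeodesicCycle

variable {ℓ : ℕ} {c : ℕ → V}

lemma reachable (hc : G.IsGeodesicCycle r ℓ c) {m : ℕ} (hm : m ≤ 2 * ℓ) :
    G.Reachable r (c m) := by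
  induction m with
  | zero => rw [hc.apply_zero]
  | succ m ih => exact (ih (by omega)).trans (hc.adj m (by omega)).reachable

variable [DecidableEq V]

lemma apply_mem_image (hc : G.IsGeodesicCycle r ℓ c) {m : ℕ} (hm : m ≤ 2 * ℓ) :
    c m ∈ (range (2 * ℓ)).image c := by
  rcases hm.lt_or_eq with hm | rfl
  · exact mem_image_of_mem c (mem_range.mpr hm)
  · rw [hc.apply_two_mul, ← hc.apply_zero]
    exact mem_image_of_mem c (mem_range.mpr (by have := hc.pos; omega))

lemma exists_adj_mem_image (hc : G.IsGeodesicCycle r ℓ c) :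
    ∀ x ∈ (range (2 * ℓ)).image c, ∃ y ∈ (range (2 * ℓ)).image c, G.Adj x y := by
  intro x hx
  obtain ⟨m, hm, rfl⟩ := mem_image.mp hx
  rw [mem_range] at hm
  exact ⟨c (m + 1), hc.apply_mem_image (by omega), hc.adj m hm⟩

/-- A vertex of the cycle has the colour of `r` exactly when its position is even. -/
lemma card_filter_coloring_eq_le (hc : G.IsGeodesicCycle r ℓ c) (κ : G.Coloring Bool)
    (b : Bool) : #{x ∈ (range (2 * ℓ)).image c | κ x = b} ≤ ℓ :=
  calc #{x ∈ (range (2 * ℓ)).image c | κ x = b}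
      ≤ #((range ℓ).image fun k => c (2 * k + if b = κ r then 0 else 1)) := by
        refine card_le_card fun x hx => ?_
        obtain ⟨hxS, rfl⟩ := mem_filter.mp hx
        obtain ⟨m, hm, rfl⟩ := mem_image.mp hxS
        rw [mem_range] at hm
        have hpar := κ.even_dist_iff_congr (hc.reachable hm.le)
        rw [hc.dist_eq m hm.le, Nat.even_iff, show min m (2 * ℓ - m) % 2 = m % 2 by omega]
          at hpar
        refine mem_image.mpr ⟨m / 2, mem_range.mpr (by omega), congrArg c ?_⟩
        revert hpar
        cases κ r <;> cases κ (c m) <;> simp <;> omega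
    _ ≤ ℓ := card_image_le.trans (card_range ℓ).le

end IsGeodesicCycle

def UniqueParents (G : SimpleGraph V) (r : V) (k : ℕ) : Prop :=
  ∀ ⦃u u' v⦄, G.Adj u v → G.Adj u' v → G.dist r u + 1 = G.dist r v →
    G.dist r u' + 1 = G.dist r v → G.dist r v ≤ k → u = u'

section Finite

variable [Fintype V] {d i k : ℕ}

open Classical in
noncomputable def distLayer (G : SimpleGraph V) (r : V) (j : ℕ) : Finset V :=
  {w | G.Reachable r w ∧ G.dist r w = j}

lemma mem_distLayer {j : ℕ} {w : V} :
    w ∈ G.distLayer r j ↔ G.Reachable r w ∧ G.dist r w = j := by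
  simp [distLayer]

variable [DecidableRel G.Adj]

/-- In a bipartite graph a neighbour of a vertex of layer `i` lies in layer `i - 1` or `i + 1`;
with unique parents, at most one of them lies in layer `i - 1`. -/
lemma le_card_filter_adj_distLayer_succ (κ : G.Coloring Bool)
    (hdeg : ∀ x y, G.Adj x y → d < G.degree x) (hr : ∃ y, G.Adj r y)
    (huniq : G.UniqueParents r i) (hu : u ∈ G.distLayer r i) :
    d ≤ #{w ∈ G.distLayer r (i + 1) | G.Adj u w} := by
  classical
  obtain ⟨hur, hui⟩ := mem_distLayer.mp hu
  have hdu : d < G.degree u := by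
    obtain ⟨y, hy⟩ : ∃ y, G.Adj u y := by
      rcases Nat.eq_zero_or_pos i with rfl | hi
      · rwa [((dist_eq_zero_iff_eq_or_not_reachable).mp hui).resolve_right (· hur)] at hr
      · obtain ⟨w, hw, -⟩ := exists_adj_dist_add_one (G := G) (r := r) (v := u) (by omega)
        exact ⟨w, hw.symm⟩
    exact hdeg u y hy
  have hsub : G.neighborFinset u ⊆ {w ∈ G.distLayer r (i + 1) | G.Adj u w} ∪
      ({w | G.Adj w u ∧ G.dist r w + 1 = G.dist r u} : Finset V) := by
    intro w hw
    rw [mem_neighborFinset] at hw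
    have hne := κ.dist_ne_of_adj hur hw
    rcases hw.diff_dist_adj (u := r) with h | h | h
    · exact absurd h.symm hne
    · refine mem_union_left _ ?_
      simp [mem_distLayer, hur.trans hw.reachable, h, hui, hw]
    · refine mem_union_right _ ?_
      simp only [mem_filter, mem_univ, true_and]
      exact ⟨hw.symm, by omega⟩
  have hparent : #({w | G.Adj w u ∧ G.dist r w + 1 = G.dist r u} : Finset V) ≤ 1 := by
    refine card_le_one.mpr fun w hw w' hw' => ?_
    simp only [mem_filter, mem_univ, true_and] at hw hw'
    exact huniq hw.1 hw'.1 hw.2 hw'.2 (by omega)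
  have := (card_le_card hsub).trans (card_union_le _ _)
  rw [card_neighborFinset_eq_degree] at this
  omega

lemma card_distLayer_mul_le (κ : G.Coloring Bool) (hdeg : ∀ x y, G.Adj x y → d < G.degree x)
    (hr : ∃ y, G.Adj r y) (huniq : G.UniqueParents r (i + 1)) :
    #(G.distLayer r i) * d ≤ #(G.distLayer r (i + 1)) := by
  have key := card_mul_le_card_mul G.Adj (s := G.distLayer r i) (t := G.distLayer r (i + 1))
    (m := d) (n := 1) (fun u hu => le_card_filter_adj_distLayer_succ κ hdeg hr
      (fun _ _ _ h h' hw hw' _ => huniq h h' hw hw' (by omega)) hu) ?_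
  · simpa using key
  · intro v hv
    refine card_le_one.mpr fun u hu u' hu' => ?_
    simp only [bipartiteBelow, mem_filter, mem_distLayer] at hu hu' hv
    exact huniq hu.2 hu'.2 (by omega) (by omega) (by omega)

lemma pow_le_card_distLayer (κ : G.Coloring Bool) (hdeg : ∀ x y, G.Adj x y → d < G.degree x)
    (hr : ∃ y, G.Adj r y) (huniq : G.UniqueParents r k) {j : ℕ} (hj : j ≤ k) :
    d ^ j ≤ #(G.distLayer r j) := by
  induction j with
  | zero => simpa using ⟨r, mem_distLayer.mpr ⟨Reachable.refl r, dist_self⟩⟩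
  | succ j ih =>
    calc d ^ (j + 1) ≤ #(G.distLayer r j) * d := by
          rw [pow_succ]; exact Nat.mul_le_mul_right d (ih (by omega))
      _ ≤ #(G.distLayer r (j + 1)) :=
          card_distLayer_mul_le κ hdeg hr fun _ _ _ h h' hu hu' _ => huniq h h' hu hu' (by omega)

lemma exists_adj_notMem_of_card_le (κ : G.Coloring Bool) {S : Finset V} {p : ℕ}
    (hdeg : ∀ x y, G.Adj x y → p < G.degree x) (hSne : S.Nonempty)
    (hS : ∀ x ∈ S, ∃ y ∈ S, G.Adj x y) {b : Bool} (hb : #{x ∈ S | κ x = b} ≤ p) :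
    ∃ x ∈ S, ∃ y ∉ S, G.Adj x y ∧ κ y = b := by
  obtain ⟨x₀, hx₀⟩ := hSne
  obtain ⟨x, hxS, hxb⟩ : ∃ x ∈ S, κ x ≠ b := by
    by_cases h : κ x₀ = b
    · obtain ⟨y, hyS, hy⟩ := hS x₀ hx₀
      exact ⟨y, hyS, h ▸ (κ.valid hy).symm⟩
    · exact ⟨x₀, hx₀, h⟩
  obtain ⟨y₀, -, hy₀⟩ := hS x hxS
  obtain ⟨y, hyx, hyS⟩ := exists_mem_notMem_of_card_lt_card (t := G.neighborFinset x)
    (s := {x ∈ S | κ x = b}) (by rw [card_neighborFinset_eq_degree]; linarith [hdeg x y₀ hy₀])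
  rw [mem_neighborFinset] at hyx
  have hyb : κ y = b := by
    have := κ.valid hyx
    revert this hxb
    cases κ x <;> cases κ y <;> cases b <;> simp
  exact ⟨x, hxS, y, fun h => hyS (mem_filter.mpr ⟨h, hyb⟩), hyx, hyb⟩

variable [DecidableEq V]

/-- Sending each vertex of positive level to the edge towards a chosen lower neighbour is
injective, and a vertex with two lower neighbours leaves one of its two edges unused. -/
lemma card_filter_pos_lt_card_edgeFinset_inter_sym2 (S : Finset V) (ℓ : V → ℕ)
    (hdown : ∀ w ∈ S, 0 < ℓ w → ∃ w' ∈ S, G.Adj w w' ∧ ℓ w' + 1 = ℓ w) {u u' : V}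
    (hv : v ∈ S) (hu : u ∈ S) (hu' : u' ∈ S) (hne : u ≠ u') (huv : G.Adj u v)
    (hu'v : G.Adj u' v) (hℓu : ℓ u + 1 = ℓ v) (hℓu' : ℓ u' + 1 = ℓ v) :
    #{w ∈ S | 0 < ℓ w} < #(G.edgeFinset ∩ S.sym2) := by
  choose! δ hδS hδadj hδℓ using hdown
  obtain ⟨x, hxS, hxv, hℓx, hxδ⟩ : ∃ x ∈ S, G.Adj x v ∧ ℓ x + 1 = ℓ v ∧ x ≠ δ v := by
    by_cases h : u = δ v
    · exact ⟨u', hu', hu'v, hℓu', fun h' => hne (h.trans h'.symm)⟩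
    · exact ⟨u, hu, huv, hℓu, h⟩
  have hinj : Set.InjOn (fun w => s(w, δ w)) ({w ∈ S | 0 < ℓ w} : Finset V) := by
    intro w hw w' hw' h
    rw [mem_coe, mem_filter] at hw hw'
    rcases Sym2.eq_iff.mp h with ⟨h1, -⟩ | ⟨h1, h2⟩
    · exact h1
    · have h3 := hδℓ w hw.1 hw.2
      have h4 := hδℓ w' hw'.1 hw'.2
      rw [h2] at h3
      rw [← h1] at h4
      omega
  have hsub : {w ∈ S | 0 < ℓ w}.image (fun w => s(w, δ w)) ⊆
      (G.edgeFinset ∩ S.sym2).erase s(x, v) := by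
    intro e he
    obtain ⟨w, hw, rfl⟩ := mem_image.mp he
    rw [mem_filter] at hw
    refine mem_erase.mpr ⟨fun h => ?_, mem_inter.mpr ⟨?_, ?_⟩⟩
    · rcases Sym2.eq_iff.mp h with ⟨rfl, h2⟩ | ⟨rfl, rfl⟩
      · have := hδℓ w hw.1 hw.2
        rw [h2] at this
        omega
      · exact hxδ rfl
    · exact mem_edgeFinset.mpr (hδadj w hw.1 hw.2)
    · exact mk_mem_sym2_iff.mpr ⟨hw.1, hδS w hw.1 hw.2⟩
  have hxv_mem : s(x, v) ∈ G.edgeFinset ∩ S.sym2 :=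
    mem_inter.mpr ⟨mem_edgeFinset.mpr hxv, mk_mem_sym2_iff.mpr ⟨hxS, hv⟩⟩
  calc #{w ∈ S | 0 < ℓ w} = #({w ∈ S | 0 < ℓ w}.image fun w => s(w, δ w)) :=
        (card_image_of_injOn hinj).symm
    _ ≤ #((G.edgeFinset ∩ S.sym2).erase s(x, v)) := card_le_card hsub
    _ < #(G.edgeFinset ∩ S.sym2) := card_erase_lt_of_mem hxv_mem

lemma IsGeodesicCycle.card_image_le_card_edgeFinset_inter_sym2 {ℓ : ℕ} {c : ℕ → V}
    (hc : G.IsGeodesicCycle r ℓ c) (hne : c (ℓ - 1) ≠ c (ℓ + 1)) :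
    #((range (2 * ℓ)).image c) ≤ #(G.edgeFinset ∩ ((range (2 * ℓ)).image c).sym2) := by
  set S := (range (2 * ℓ)).image c
  have hℓ := hc.pos
  have hdown : ∀ w ∈ S, 0 < G.dist r w →
      ∃ w' ∈ S, G.Adj w w' ∧ G.dist r w' + 1 = G.dist r w := by
    intro w hw hpos
    obtain ⟨m, hm, rfl⟩ := mem_image.mp hw
    rw [mem_range] at hm
    rw [hc.dist_eq m hm.le] at hpos ⊢
    by_cases hmℓ : m ≤ ℓ
    · refine ⟨c (m - 1), hc.apply_mem_image (by omega), ?_, by rw [hc.dist_eq _ (by omega)]; omega⟩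
      have := hc.adj (m - 1) (by omega)
      rwa [Nat.sub_add_cancel (by omega), adj_comm] at this
    · exact ⟨c (m + 1), hc.apply_mem_image (by omega), hc.adj m hm,
        by rw [hc.dist_eq _ (by omega)]; omega⟩
  have hu := hc.adj (ℓ - 1) (by omega)
  rw [Nat.sub_add_cancel hℓ] at hu
  have hlt := card_filter_pos_lt_card_edgeFinset_inter_sym2 S (G.dist r) hdown
    (hc.apply_mem_image (by omega)) (hc.apply_mem_image (by omega))
    (hc.apply_mem_image (by omega)) hne hu
    (hc.adj ℓ (by omega)).symm (by rw [hc.dist_eq _ (by omega), hc.dist_eq _ (by omega)]; omega)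
    (by rw [hc.dist_eq _ (by omega), hc.dist_eq _ (by omega)]; omega)
  have hroot : #{w ∈ S | ¬ 0 < G.dist r w} ≤ 1 := by
    suffices ∀ w ∈ S, G.dist r w = 0 → w = r by
      refine card_le_one.mpr fun w hw w' hw' => ?_
      simp only [mem_filter, not_lt, Nat.le_zero] at hw hw'
      rw [this w hw.1 hw.2, this w' hw'.1 hw'.2]
    intro w hw h0
    obtain ⟨m, hm, rfl⟩ := mem_image.mp hw
    rw [mem_range] at hm
    rw [hc.dist_eq m hm.le] at h0
    rw [show m = 0 by omega, hc.apply_zero]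
  have := card_filter_add_card_filter_not (s := S) (fun w => 0 < G.dist r w)
  omega

lemma edgeFinset_inter_sym2_ssubset_insert {S : Finset V} {x y : V} (hx : x ∈ S) (hy : y ∉ S)
    (hxy : G.Adj x y) : G.edgeFinset ∩ S.sym2 ⊂ G.edgeFinset ∩ (insert y S).sym2 := by
  refine Finset.ssubset_iff_subset_ne.mpr
    ⟨inter_subset_inter_left (sym2_mono (subset_insert y S)), fun h => hy ?_⟩
  have : s(x, y) ∈ G.edgeFinset ∩ (insert y S).sym2 :=
    mem_inter.mpr ⟨mem_edgeFinset.mpr hxy, mk_mem_sym2_iff.mpr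
      ⟨mem_insert_of_mem hx, mem_insert_self y S⟩⟩
  rw [← h, mem_inter, mk_mem_sym2_iff] at this
  exact this.2.2

theorem exists_balanced_of_dense (κ : G.Coloring Bool) {p : ℕ}
    (hdeg : ∀ x y, G.Adj x y → p < G.degree x) (S : Finset V) (hSne : S.Nonempty)
    (hS : ∀ x ∈ S, ∃ y ∈ S, G.Adj x y) (hside : ∀ b, #{x ∈ S | κ x = b} ≤ p)
    (hdense : #S ≤ #(G.edgeFinset ∩ S.sym2)) :
    ∃ T : Finset V, (∀ b, #{x ∈ T | κ x = b} = p) ∧ 2 * p ≤ #(G.edgeFinset ∩ T.sym2) := by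
  have hcard := card_filter_eq_true_add_card_filter_eq_false κ S
  by_cases hfull : ∀ b, #{x ∈ S | κ x = b} = p
  · exact ⟨S, hfull, by rw [hfull, hfull] at hcard; omega⟩
  push Not at hfull
  obtain ⟨b, hb⟩ := hfull
  have hb : #{x ∈ S | κ x = b} < p := lt_of_le_of_ne (hside b) hb
  obtain ⟨x, hx, y, hy, hxy, hyb⟩ := exists_adj_notMem_of_card_le κ hdeg hSne hS hb.le
  refine exists_balanced_of_dense κ hdeg (insert y S) (insert_nonempty y S) ?_ ?_ ?_
  · intro z hz
    rcases mem_insert.mp hz with rfl | hz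
    · exact ⟨x, mem_insert_of_mem hx, hxy.symm⟩
    · obtain ⟨w, hw, hzw⟩ := hS z hz
      exact ⟨w, mem_insert_of_mem hw, hzw⟩
  · intro b'
    rw [filter_insert]
    split_ifs with h
    · rw [card_insert_of_notMem (fun h' => hy (mem_filter.mp h').1), ← h, hyb]
      omega
    · exact hside b'
  · rw [card_insert_of_notMem hy]
    exact hdense.trans_lt (card_lt_card (edgeFinset_inter_sym2_ssubset_insert hx hy hxy))
termination_by 2 * p - #S
decreasing_by
  rw [card_insert_of_notMem hy]
  cases b <;> [have := hside true; have := hside false] <;> omega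

theorem exists_balanced_dense_of_card_lt_pow (κ : G.Coloring Bool) {p : ℕ} (hpd : p ≤ d)
    (hdeg : ∀ x y, G.Adj x y → d < G.degree x) (hV : Fintype.card V < d ^ p)
    (hE : ∃ x y, G.Adj x y) :
    ∃ T : Finset V, (∀ b, #{x ∈ T | κ x = b} = p) ∧ 2 * p ≤ #(G.edgeFinset ∩ T.sym2) := by
  obtain ⟨r, y, hry⟩ := hE
  by_cases huniq : G.UniqueParents r p
  · have := (pow_le_card_distLayer κ hdeg ⟨y, hry⟩ huniq le_rfl).trans (card_le_univ _)
    omega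
  simp only [UniqueParents, not_forall] at huniq
  obtain ⟨u, u', v, huv, hu'v, hu, hu', hvp, hne⟩ := huniq
  obtain ⟨c, hc, hcne⟩ := exists_isGeodesicCycle huv hu'v hne hu hu'
  exact exists_balanced_of_dense κ (fun x y h => hpd.trans_lt (hdeg x y h)) _
    ⟨r, hc.apply_zero ▸ hc.apply_mem_image (Nat.zero_le _)⟩ hc.exists_adj_mem_image
    (fun b => (hc.card_filter_coloring_eq_le κ b).trans hvp)
    (hc.card_image_le_card_edgeFinset_inter_sym2 hcne)

end Finite

section OfEdges

variable {α β : Type*}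

def ofEdges (E : Finset (α × β)) : SimpleGraph (α ⊕ β) where
  Adj
    | .inl a, .inr b => (a, b) ∈ E
    | .inr b, .inl a => (a, b) ∈ E
    | _, _ => False
  symm := ⟨by rintro (a | b) (a' | b') h <;> exact h⟩
  loopless := ⟨by rintro (a | b) h <;> exact h⟩

variable {E : Finset (α × β)}

@[simp] lemma ofEdges_adj_inl_inr {a : α} {b : β} :
    (ofEdges E).Adj (.inl a) (.inr b) ↔ (a, b) ∈ E :=
  Iff.rfl

@[simp] lemma ofEdges_adj_inr_inl {a : α} {b : β} :
    (ofEdges E).Adj (.inr b) (.inl a) ↔ (a, b) ∈ E :=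
  Iff.rfl

@[simp] lemma not_ofEdges_adj_inl_inl {a a' : α} : ¬ (ofEdges E).Adj (.inl a) (.inl a') := id

@[simp] lemma not_ofEdges_adj_inr_inr {b b' : β} : ¬ (ofEdges E).Adj (.inr b) (.inr b') := id

def ofEdgesColoring (E : Finset (α × β)) : (ofEdges E).Coloring Bool :=
  Coloring.mk Sum.isLeft <| by rintro (a | b) (a' | b') h <;> simp_all

@[simp] lemma ofEdgesColoring_apply (x : α ⊕ β) : ofEdgesColoring E x = x.isLeft := rfl

variable [DecidableEq α] [DecidableEq β]

instance : DecidableRel (ofEdges E).Adj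
  | .inl a, .inr b => inferInstanceAs (Decidable ((a, b) ∈ E))
  | .inr b, .inl a => inferInstanceAs (Decidable ((a, b) ∈ E))
  | .inl _, .inl _ => isFalse id
  | .inr _, .inr _ => isFalse id

variable [Fintype α] [Fintype β]

lemma card_filter_fst_le_degree (a : α) :
    #{e ∈ E | e.1 = a} ≤ (ofEdges E).degree (.inl a) := by
  rw [← card_neighborFinset_eq_degree]
  refine card_le_card_of_injOn (fun e => .inr e.2) (fun e he => ?_) (fun e he e' he' h => ?_)
  · obtain ⟨he, rfl⟩ := mem_filter.mp he
    simpa using he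
  · rw [mem_coe, mem_filter] at he he'
    exact Prod.ext (he.2.trans he'.2.symm) (Sum.inr_injective h)

lemma card_filter_snd_le_degree (b : β) :
    #{e ∈ E | e.2 = b} ≤ (ofEdges E).degree (.inr b) := by
  rw [← card_neighborFinset_eq_degree]
  refine card_le_card_of_injOn (fun e => .inl e.1) (fun e he => ?_) (fun e he e' he' h => ?_)
  · obtain ⟨he, rfl⟩ := mem_filter.mp he
    simpa using he
  · rw [mem_coe, mem_filter] at he he'
    exact Prod.ext (Sum.inl_injective h) (he.2.trans he'.2.symm)

lemma card_ofEdges_edgeFinset_inter_sym2_le (T : Finset (α ⊕ β)) :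
    #((ofEdges E).edgeFinset ∩ T.sym2) ≤ #(E ∩ T.toLeft ×ˢ T.toRight) := by
  refine le_trans (card_le_card fun e he => ?_)
    (card_image_le (f := fun e => s(.inl e.1, .inr e.2)))
  induction e using Sym2.ind with
  | _ x y =>
    rw [mem_inter, mem_edgeFinset, mem_edgeSet, mk_mem_sym2_iff] at he
    obtain ⟨hxy, hx, hy⟩ := he
    rcases x with a | b <;> rcases y with a' | b' <;> simp at hxy
    · exact mem_image.mpr ⟨(a, b'), by simp [hxy, hx, hy], rfl⟩
    · exact mem_image.mpr ⟨(a', b), by simp [hxy, hx, hy], Sym2.eq_swap⟩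

theorem exists_dense_box {p d : ℕ} (E : Finset (α × β)) (hE : E.Nonempty)
    (hdeg : ∀ e ∈ E, d < #{e' ∈ E | e'.1 = e.1} ∧ d < #{e' ∈ E | e'.2 = e.2}) (hpd : p ≤ d)
    (hcard : Fintype.card α + Fintype.card β < d ^ p) :
    ∃ (A : Finset α) (B : Finset β), #A = p ∧ #B = p ∧ 2 * p ≤ #(E ∩ A ×ˢ B) := by
  have hdegG : ∀ x y, (ofEdges E).Adj x y → d < (ofEdges E).degree x := by
    rintro (a | b) (a' | b') h <;> simp only [not_ofEdges_adj_inl_inl, not_ofEdges_adj_inr_inr,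
      ofEdges_adj_inl_inr, ofEdges_adj_inr_inl] at h
    · exact (hdeg _ h).1.trans_le (card_filter_fst_le_degree a)
    · exact (hdeg _ h).2.trans_le (card_filter_snd_le_degree b)
  obtain ⟨⟨a, b⟩, hab⟩ := hE
  obtain ⟨T, hside, hdense⟩ := exists_balanced_dense_of_card_lt_pow (ofEdgesColoring E) hpd
    hdegG (by simpa using hcard) ⟨.inl a, .inr b, hab⟩
  refine ⟨T.toLeft, T.toRight, ?_, ?_, hdense.trans (card_ofEdges_edgeFinset_inter_sym2_le T)⟩
  · rw [card_toLeft_eq_card_filter_isLeft]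
    exact hside true
  · rw [card_toRight_eq_card_filter_isLeft_eq_false]
    exact hside false

end OfEdges

end SimpleGraph

theorem exists_box_card_image_add_le {α β : Type*} [DecidableEq α] [DecidableEq β] [Fintype α]
    [Fintype β] (c : α → β → ℕ) {k p d : ℕ} (hc : ∀ a b, c a b < k) (hpd : p ≤ d)
    (hcard : Fintype.card α + Fintype.card β < d ^ p)
    (hk : k * (d * (Fintype.card α + Fintype.card β)) < Fintype.card α * Fintype.card β) :
    ∃ (A : Finset α) (B : Finset β), #A = p ∧ #B = p ∧
      #((A ×ˢ B).image fun e => c e.1 e.2) + 2 * p ≤ p * p + 1 := by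
  obtain ⟨col, -, hcol⟩ := exists_lt_card_fiber_of_mul_lt_card_of_maps_to
    (s := univ) (t := range k) (f := fun e : α × β => c e.1 e.2)
    (fun e _ => mem_range.mpr (hc _ _)) (by simpa using hk)
  set E₀ : Finset (α × β) := {e | c e.1 e.2 = col}
  have himage : d * (#(E₀.image Prod.fst) + #(E₀.image Prod.snd)) < #E₀ :=
    lt_of_le_of_lt (Nat.mul_le_mul_left d (Nat.add_le_add (card_le_univ _) (card_le_univ _))) hcol
  obtain ⟨E, hEcol, hEne, hdeg⟩ := exists_subset_forall_lt_card_fiber _ himage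
  obtain ⟨A, B, hA, hB, hAB⟩ := SimpleGraph.exists_dense_box E hEne hdeg hpd hcard
  refine ⟨A, B, hA, hB, ?_⟩
  have := card_image_add_card_le_of_forall_eq (s := A ×ˢ B) (M := E ∩ A ×ˢ B)
    (f := fun e : α × β => c e.1 e.2) inter_subset_right
    fun e he => (mem_filter.mp (hEcol (mem_inter.mp he).1)).2
  rw [card_product, hA, hB] at this
  omega

lemma exists_coloring_lt_rBip {n s t q : ℕ} (hq : q ≤ s * t) :
    ∃ c : Fin n → Fin n → ℕ, (∀ a b, c a b < rBip n s t q) ∧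
      ∀ A B : Finset (Fin n), (#A = s ∧ #B = t) ∨ (#A = t ∧ #B = s) →
        q ≤ #((A ×ˢ B).image fun p => c p.1 p.2) := by
  refine Nat.sInf_mem (s := {k : ℕ | ∃ c : Fin n → Fin n → ℕ, (∀ a b, c a b < k) ∧
    ∀ A B : Finset (Fin n), (#A = s ∧ #B = t) ∨ (#A = t ∧ #B = s) →
      q ≤ #((A ×ˢ B).image fun p => c p.1 p.2)})
    ⟨n * n, fun a b => finProdFinEquiv (a, b), fun a b => Fin.isLt _, fun A B hAB => ?_⟩
  rw [card_image_of_injective _ fun x y h => finProdFinEquiv.injective (Fin.ext h), card_product]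
  rcases hAB with ⟨hA, hB⟩ | ⟨hA, hB⟩ <;> rw [hA, hB] <;> linarith [mul_comm s t]

theorem le_two_mul_mul_rBip {n p d : ℕ} (hp : 2 ≤ p) (hpd : p ≤ d) (hd : 2 * n < d ^ p) :
    n ≤ 2 * d * rBip n p p (p ^ 2 - 2 * p + 2) := by
  have hsq : p ^ 2 = p * p := sq p
  have h2p : 2 * p ≤ p * p := Nat.mul_le_mul_right p hp
  obtain ⟨c, hc, hcopies⟩ := exists_coloring_lt_rBip (n := n) (s := p) (t := p)
    (q := p ^ 2 - 2 * p + 2) (by omega)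
  by_contra! h
  obtain ⟨A, B, hA, hB, hcount⟩ := exists_box_card_image_add_le c hc hpd
    (by simpa [two_mul] using hd)
    (by simpa [← two_mul, mul_comm, mul_left_comm, mul_assoc] using
      Nat.mul_lt_mul_of_pos_right h (show 0 < n by omega))
  have := hcopies A B (Or.inl ⟨hA, hB⟩)
  omega

lemma exists_le_pow_and_le_two_mul_rpow {n p : ℕ} (hn : 1 ≤ n) (hp : p ≠ 0) :
    ∃ m : ℕ, n ≤ m ^ p ∧ (m : ℝ) ≤ 2 * (n : ℝ) ^ (1 / (p : ℝ)) := by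
  set x := (n : ℝ) ^ (1 / (p : ℝ))
  have hx : 1 ≤ x := Real.one_le_rpow (by exact_mod_cast hn) (by positivity)
  have hxp : x ^ p = n := by
    rw [← Real.rpow_natCast, ← Real.rpow_mul (by positivity), one_div_mul_cancel (by simpa),
      Real.rpow_one]
  refine ⟨⌈x⌉₊, ?_, ?_⟩
  · exact_mod_cast hxp ▸ pow_le_pow_left₀ (by positivity) (Nat.le_ceil x) p
  · linarith [Nat.ceil_lt_add_one (by positivity : 0 ≤ x)]

/-- For `p ≥ 2`, `r(K_{n,n}, K_{p,p}, p² - 2p + 2) = Ω(n^{1 - 1/p})`. -/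
theorem stmt_15 (p : ℕ) (hp : 2 ≤ p) :
    ∃ c : ℝ, 0 < c ∧ ∃ n₀ : ℕ, ∀ n : ℕ, n₀ ≤ n →
      c * (n : ℝ) ^ ((1 : ℝ) - 1 / (p : ℝ)) ≤
        (rBip n p p (p ^ 2 - 2 * p + 2) : ℝ) := by
  refine ⟨1 / 8, by norm_num, p ^ p, fun n hn => ?_⟩
  have hn1 : 1 ≤ n := (Nat.one_le_pow _ _ (by omega)).trans hn
  obtain ⟨m, hnm, hm⟩ := exists_le_pow_and_le_two_mul_rpow hn1 (by omega : p ≠ 0)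
  have hpm : p ≤ m := (Nat.pow_le_pow_iff_left (by omega)).mp (hn.trans hnm)
  have h2n : 2 * n < (2 * m) ^ p := by
    have : 2 ^ 2 ≤ 2 ^ p := Nat.pow_le_pow_right (by norm_num) hp
    rw [mul_pow]
    nlinarith
  have key : (n : ℝ) ≤ 2 * (2 * m) * rBip n p p (p ^ 2 - 2 * p + 2) := by
    exact_mod_cast le_two_mul_mul_rBip hp (by omega) h2n
  have hsplit : (n : ℝ) ^ ((1 : ℝ) - 1 / p) * (n : ℝ) ^ (1 / (p : ℝ)) = n := by
    rw [← Real.rpow_add (by positivity), sub_add_cancel, Real.rpow_one]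
  have hx : 0 < (n : ℝ) ^ (1 / (p : ℝ)) := by positivity
  nlinarith [Nat.cast_nonneg (α := ℝ) (rBip n p p (p ^ 2 - 2 * p + 2))]
end

section
/- Let s, t, a, b be integers with 2 ≤ a ≤ s and 2 ≤ b ≤ t. Then for every real ε with 0 < ε < 1 there exists a natural number n₀ such that for all n ≥ n₀, r(K_{n,n}, K_{s,t}, st - ab + 2) ≥ (1 - ε) · (n/(max{a,b} - 1))^{1/min{a,b}}. -/
open Finset

open Fintype
open scoped Nat

/-! Take an optimal colouring of `K_{n,n}` with `k` colours; some colour class has at least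
`n²/k` edges. With `m = min a b` and `M = max a b`, no colour class contains a `K_{m,M}`: it
would extend to a copy of `K_{s,t}` with at most `st - ab + 1` colours. The Kővári–Sós–Turán count
(`∑_v C(deg v, m) ≤ (M - 1) C(n, m)` plus convexity) bounds such a class by
`n (m - 1) + (M - 1)^{1/m} n^{2 - 1/m}` edges, and comparing with `n²/k` gives
`k ≥ (1 - ε) (n/(M - 1))^{1/m}` once `n (m - 1)` is negligible, i.e. once `√n ≥ (m - 1)/ε`. -/

lemma pow_sub_pred_le_factorial_mul_choose (d m : ℕ) :
    (d - (m - 1)) ^ m ≤ m ! * d.choose m := by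
  rw [← Nat.descFactorial_eq_factorial_mul_choose, Nat.descFactorial_eq_prod_range]
  calc (d - (m - 1)) ^ m = ∏ _i ∈ range m, (d - (m - 1)) := by rw [prod_const, card_range]
    _ ≤ ∏ i ∈ range m, (d - i) :=
        prod_le_prod' fun i hi => by have := mem_range.1 hi; omega

lemma sum_choose_card_le {α β : Type*} [Fintype α] [Fintype β] [DecidableEq α]
    (N : β → Finset α) {m M : ℕ} (h : ∀ S : Finset α, #S = m → #{v | S ⊆ N v} ≤ M) :
    ∑ v, (#(N v)).choose m ≤ M * (card α).choose m := by
  have hfilter : ∀ v, (univ.powersetCard m).filter (· ⊆ N v) = (N v).powersetCard m := by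
    intro v; ext S; simp [and_comm]
  calc ∑ v, (#(N v)).choose m
      = ∑ v, #((univ.powersetCard m).bipartiteAbove (fun v S => S ⊆ N v) v) := by
        simp only [bipartiteAbove, hfilter, card_powersetCard]
    _ = ∑ S ∈ univ.powersetCard m, #(univ.bipartiteBelow (fun v S => S ⊆ N v) S) :=
        sum_card_bipartiteAbove_eq_sum_card_bipartiteBelow _
    _ ≤ ∑ S ∈ univ.powersetCard m, M := sum_le_sum fun S hS => h S (mem_powersetCard.1 hS).2
    _ = M * (card α).choose m := by simp [mul_comm]

theorem card_sub_mul_pow_le_of_not_product_subset {α β : Type*} [Fintype α] [Fintype β]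
    [DecidableEq α] [DecidableEq β] {E : Finset (α × β)} {m M : ℕ} (hm : 0 < m)
    (hE : ∀ (S : Finset α) (B : Finset β), #S = m → #B = M → ¬ S ×ˢ B ⊆ E) :
    (#E - card β * (m - 1)) ^ m ≤ (M - 1) * card β ^ (m - 1) * card α ^ m := by
  set N : β → Finset α := fun v => {u | (u, v) ∈ E}
  have hdeg : #E = ∑ v, #(N v) :=
    calc #E = ∑ x : α × β, if x ∈ E then 1 else 0 := by
          rw [← card_filter, filter_mem_eq_inter, univ_inter]
      _ = ∑ v, ∑ u, if (u, v) ∈ E then 1 else 0 := Fintype.sum_prod_type_right _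
      _ = ∑ v, #(N v) := by simp only [N, card_filter]
  have hcommon : ∀ S : Finset α, #S = m → #{v | S ⊆ N v} ≤ M - 1 := by
    intro S hS
    by_contra! h
    obtain ⟨B, hB, hBcard⟩ := exists_subset_card_eq (show M ≤ #{v | S ⊆ N v} by omega)
    refine hE S B hS hBcard fun x hx => ?_
    rw [mem_product] at hx
    simpa [N] using (mem_filter.1 (hB hx.2)).2 hx.1
  have hpow : ∑ v, (#(N v) - (m - 1)) ^ m ≤ (M - 1) * card α ^ m :=
    calc ∑ v, (#(N v) - (m - 1)) ^ m ≤ ∑ v, m ! * (#(N v)).choose m :=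
          sum_le_sum fun v _ => pow_sub_pred_le_factorial_mul_choose _ _
      _ = m ! * ∑ v, (#(N v)).choose m := (mul_sum _ _ _).symm
      _ ≤ m ! * ((M - 1) * (card α).choose m) := by
          gcongr; exact sum_choose_card_le N hcommon
      _ = (M - 1) * (m ! * (card α).choose m) := by ring
      _ ≤ (M - 1) * card α ^ m := by
          gcongr
          rw [← Nat.descFactorial_eq_factorial_mul_choose]
          exact Nat.descFactorial_le_pow _ _
  have hsum : #E - card β * (m - 1) ≤ ∑ v, (#(N v) - (m - 1)) := by
    rw [hdeg, tsub_le_iff_right]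
    calc ∑ v, #(N v) ≤ ∑ v, ((#(N v) - (m - 1)) + (m - 1)) :=
          sum_le_sum fun v _ => le_tsub_add
      _ = _ := by simp [sum_add_distrib]
  obtain ⟨m, rfl⟩ : ∃ m', m = m' + 1 := ⟨m - 1, by omega⟩
  calc (#E - card β * (m + 1 - 1)) ^ (m + 1)
      ≤ (∑ v, (#(N v) - (m + 1 - 1))) ^ (m + 1) := Nat.pow_le_pow_left hsum _
    _ ≤ card β ^ m * ∑ v, (#(N v) - (m + 1 - 1)) ^ (m + 1) :=
        pow_sum_le_card_mul_sum_pow (by simp) m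
    _ ≤ card β ^ m * ((M - 1) * card α ^ (m + 1)) := by gcongr
    _ = (M - 1) * card β ^ (m + 1 - 1) * card α ^ (m + 1) := by
        rw [Nat.add_sub_cancel]; ring

lemma le_sq_div_rpow_of_pow_le {x y D : ℝ} {m : ℕ} (hm : m ≠ 0) (hx : 0 < x) (hy : 0 ≤ y)
    (hD : 0 < D) (h : y ^ m ≤ D * x ^ (2 * m - 1)) : y ≤ x ^ 2 / (x / D) ^ ((1 : ℝ) / m) := by
  set z := (x / D) ^ ((1 : ℝ) / m)
  have hz : 0 < z := by positivity
  have hzm : z ^ m = x / D := by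
    simp only [z, one_div]; exact Real.rpow_inv_natCast_pow (by positivity) hm
  have hx2m : x ^ (2 * m) = x ^ (2 * m - 1) * x := by rw [← pow_succ]; congr 1; omega
  refine (pow_le_pow_iff_left₀ hy (by positivity) hm).1 (h.trans_eq ?_)
  rw [div_pow, hzm, ← pow_mul, hx2m]
  field_simp

lemma card_le_of_not_product_subset {α : Type*} [Fintype α] [DecidableEq α]
    {E : Finset (α × α)} {m M : ℕ} (hm : 0 < m) (hM : 2 ≤ M) (hα : 0 < card α)
    (hE : ∀ S B : Finset α, #S = m → #B = M → ¬ S ×ˢ B ⊆ E) :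
    (#E : ℝ) ≤ card α * ((m : ℝ) - 1) +
      (card α : ℝ) ^ 2 / (card α / ((M : ℝ) - 1)) ^ ((1 : ℝ) / m) := by
  have hkst := card_sub_mul_pow_le_of_not_product_subset hm hE
  rw [mul_assoc, ← pow_add, show m - 1 + m = 2 * m - 1 by omega] at hkst
  have hkstR : ((#E - card α * (m - 1) : ℕ) : ℝ) ^ m ≤
      ((M : ℝ) - 1) * (card α : ℝ) ^ (2 * m - 1) := by
    have := (Nat.cast_le (α := ℝ)).2 hkst
    push_cast [Nat.cast_sub (by omega : 1 ≤ M)] at this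
    exact this
  have hy := le_sq_div_rpow_of_pow_le hm.ne' (by exact_mod_cast hα) (Nat.cast_nonneg _)
    (by rify at hM; linarith) hkstR
  have hsplit : ((#E : ℕ) : ℝ) ≤
      ((card α * (m - 1) : ℕ) : ℝ) + ((#E - card α * (m - 1) : ℕ) : ℝ) := by
    exact_mod_cast le_add_tsub
  push_cast [Nat.cast_sub hm] at hsplit
  linarith

lemma one_sub_mul_le_of_sq_div_le {n k e x c ε : ℝ} (hn : 0 < n) (hk : 0 < k) (hx : 0 < x)
    (hε : 0 ≤ ε) (hke : n ^ 2 / k ≤ e) (he : e ≤ n * c + n ^ 2 / x) (hxc : x * c ≤ ε * n) :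
    (1 - ε) * x ≤ k := by
  have hnk : n ^ 2 ≤ k * (n * c + n ^ 2 / x) := by
    rw [div_le_iff₀ hk] at hke; nlinarith
  have hxk : n ^ 2 * x ≤ n ^ 2 * (k * (1 + ε)) := by
    have := mul_le_mul_of_nonneg_right hnk hx.le
    rw [mul_assoc, add_mul, div_mul_cancel₀ _ hx.ne'] at this
    nlinarith [mul_le_mul_of_nonneg_left hxc (by positivity : 0 ≤ k * n)]
  have hxk' := le_of_mul_le_mul_left hxk (by positivity)
  rcases le_total x k with h | h
  · nlinarith [mul_nonneg hε hx.le]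
  · nlinarith [mul_nonneg hε (sub_nonneg.2 h)]

lemma rpow_one_div_mul_le {n D c ε : ℝ} {m : ℕ} (hn : 1 ≤ n) (hD : 1 ≤ D) (hm : 2 ≤ m)
    (hc : 0 ≤ c) (hε : 0 < ε) (hcn : (c / ε) ^ 2 ≤ n) :
    (n / D) ^ ((1 : ℝ) / m) * c ≤ ε * n := by
  have hx : (n / D) ^ ((1 : ℝ) / m) ≤ √n := by
    rw [Real.sqrt_eq_rpow]
    calc (n / D) ^ ((1 : ℝ) / m) ≤ n ^ ((1 : ℝ) / m) :=
          Real.rpow_le_rpow (by positivity) (div_le_self (by positivity) hD) (by positivity)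
      _ ≤ n ^ ((1 : ℝ) / 2) := Real.rpow_le_rpow_of_exponent_le hn
          (one_div_le_one_div_of_le two_pos (by exact_mod_cast hm))
  have hcε : c ≤ ε * √n := by
    rw [← div_le_iff₀' hε]; exact Real.le_sqrt_of_sq_le hcn
  calc (n / D) ^ ((1 : ℝ) / m) * c ≤ √n * (ε * √n) := by gcongr
    _ = ε * n := by rw [mul_left_comm, Real.mul_self_sqrt (by positivity)]

lemma card_image_le_card_sdiff_add_one {ι γ : Type*} [DecidableEq ι] [DecidableEq γ]
    {f : ι → γ} {X Y : Finset ι} {i : γ} (hf : ∀ x ∈ Y, f x = i) : #(X.image f) ≤ #(X \ Y) + 1 := by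
  calc #(X.image f) ≤ #(insert i ((X \ Y).image f)) := by
        refine card_le_card fun y hy => ?_
        obtain ⟨x, hx, rfl⟩ := mem_image.1 hy
        by_cases hxY : x ∈ Y
        · simp [hf x hxY]
        · exact mem_insert_of_mem (mem_image_of_mem f (mem_sdiff.2 ⟨hx, hxY⟩))
    _ ≤ #((X \ Y).image f) + 1 := card_insert_le _ _
    _ ≤ #(X \ Y) + 1 := by gcongr; exact card_image_le

def IsKstColoring (n s t q : ℕ) (c : Fin n → Fin n → ℕ) : Prop :=
  ∀ A B : Finset (Fin n), (#A = s ∧ #B = t) ∨ (#A = t ∧ #B = s) →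
    q ≤ #((A ×ˢ B).image fun p => c p.1 p.2)

lemma exists_isKstColoring_lt_rBip (n : ℕ) {s t q : ℕ} (hq : q ≤ s * t) :
    ∃ c, (∀ u v, c u v < rBip n s t q) ∧ IsKstColoring n s t q c := by
  refine Nat.sInf_mem (s := {k | ∃ c, (∀ u v, c u v < k) ∧ IsKstColoring n s t q c})
    ⟨n * n, fun u v => finProdFinEquiv (u, v), fun u v => (finProdFinEquiv (u, v)).isLt,
      fun A B hAB => ?_⟩
  have hinj : Function.Injective fun p : Fin n × Fin n => (finProdFinEquiv p : ℕ) :=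
    Fin.val_injective.comp finProdFinEquiv.injective
  rw [card_image_of_injective _ hinj, card_product]
  rcases hAB with ⟨hA, hB⟩ | ⟨hA, hB⟩ <;> rw [hA, hB] <;> linarith [mul_comm s t]

lemma exists_sq_div_le_card_fiber {n k : ℕ} {c : Fin n → Fin n → ℕ} (hc : ∀ u v, c u v < k)
    (hk : 0 < k) :
    ∃ i, (n : ℝ) ^ 2 / k ≤ #({x | c x.1 x.2 = i} : Finset (Fin n × Fin n)) := by
  obtain ⟨i, -, hi⟩ := exists_le_card_fiber_of_nsmul_le_card_of_maps_to
    (s := univ) (t := range k) (f := fun x : Fin n × Fin n => c x.1 x.2) (b := (n : ℝ) ^ 2 / k)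
    (fun x _ => mem_range.2 (hc _ _)) ⟨0, mem_range.2 hk⟩
    (by rw [card_range, nsmul_eq_mul, mul_div_cancel₀ _ (by positivity)]; simp [sq])
  exact ⟨i, hi⟩

namespace IsKstColoring

variable {n s t : ℕ} {c : Fin n → Fin n → ℕ}

lemma symm {q : ℕ} (hc : IsKstColoring n s t q c) : IsKstColoring n t s q c :=
  fun A B hAB => hc A B hAB.symm

lemma not_product_subset {p q i : ℕ} (hc : IsKstColoring n s t (s * t - p * q + 2) c)
    (hps : p ≤ s) (hqt : q ≤ t) (hsn : s ≤ n) (htn : t ≤ n) {S B : Finset (Fin n)}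
    (hS : #S = p) (hB : #B = q) :
    ¬ S ×ˢ B ⊆ ({x | c x.1 x.2 = i} : Finset (Fin n × Fin n)) := by
  intro hmono
  obtain ⟨A, hSA, -, hA⟩ := exists_subsuperset_card_eq (n := s) (subset_univ S) (by omega)
    (by simpa using hsn)
  obtain ⟨B', hBB', -, hB'⟩ := exists_subsuperset_card_eq (n := t) (subset_univ B) (by omega)
    (by simpa using htn)
  have hcolors := card_image_le_card_sdiff_add_one (X := A ×ˢ B') (f := fun x => c x.1 x.2)
    fun x hx => by simpa using hmono hx
  rw [card_sdiff_of_subset (product_subset_product hSA hBB'), card_product, card_product,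
    hA, hB', hS, hB] at hcolors
  have := hc A B' (.inl ⟨hA, hB'⟩)
  omega

lemma not_product_subset_min_max {a b i : ℕ} (hc : IsKstColoring n s t (s * t - a * b + 2) c)
    (has : a ≤ s) (hbt : b ≤ t) (hsn : s ≤ n) (htn : t ≤ n) {S B : Finset (Fin n)}
    (hS : #S = min a b) (hB : #B = max a b) :
    ¬ S ×ˢ B ⊆ ({x | c x.1 x.2 = i} : Finset (Fin n × Fin n)) := by
  rcases le_total a b with hab | hab
  · rw [min_eq_left hab] at hS
    rw [max_eq_right hab] at hB
    exact hc.not_product_subset has hbt hsn htn hS hB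
  · rw [min_eq_right hab] at hS
    rw [max_eq_left hab] at hB
    rw [mul_comm s, mul_comm a] at hc
    exact hc.symm.not_product_subset hbt has htn hsn hS hB

end IsKstColoring

/-- For `2 ≤ a ≤ s` and `2 ≤ b ≤ t`,
`r(K_{n,n}, K_{s,t}, st - ab + 2) ≥ (1 - o(1)) (n/(max{a,b} - 1))^{1/min{a,b}}`. -/
theorem stmt_16 (s t a b : ℕ) (ha : 2 ≤ a) (has : a ≤ s) (hb : 2 ≤ b) (hbt : b ≤ t) :
    ∀ ε : ℝ, 0 < ε → ε < 1 → ∃ n₀ : ℕ, ∀ n : ℕ, n₀ ≤ n →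
      (1 - ε) * ((n : ℝ) / ((max a b : ℕ) - 1 : ℝ)) ^ ((1 : ℝ) / ((min a b : ℕ) : ℝ)) ≤
        (rBip n s t (s * t - a * b + 2) : ℝ) := by
  intro ε hε _
  refine ⟨max (max s t) ⌈((((min a b : ℕ) : ℝ) - 1) / ε) ^ 2⌉₊, fun n hn => ?_⟩
  simp only [max_le_iff] at hn
  obtain ⟨⟨hsn, htn⟩, hεn⟩ := hn
  have hn0 : 0 < n := by omega
  have hq : s * t - a * b + 2 ≤ s * t := by
    have := Nat.mul_le_mul has hbt; have := Nat.mul_le_mul ha hb; omega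
  obtain ⟨c, hck, hc⟩ := exists_isKstColoring_lt_rBip n hq
  have hk : 0 < rBip n s t (s * t - a * b + 2) :=
    (Nat.zero_le _).trans_lt (hck ⟨0, hn0⟩ ⟨0, hn0⟩)
  obtain ⟨i, hi⟩ := exists_sq_div_le_card_fiber hck hk
  have hE := card_le_of_not_product_subset (E := {x | c x.1 x.2 = i}) (m := min a b)
    (M := max a b) (by omega) (by omega) (by simpa using hn0)
    fun S B hS hB => hc.not_product_subset_min_max has hbt hsn htn hS hB
  rw [Fintype.card_fin] at hE
  have hM : (1 : ℝ) ≤ ((max a b : ℕ) : ℝ) - 1 := by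
    rw [le_sub_iff_add_le]; exact_mod_cast le_max_of_le_left ha
  have hm : (0 : ℝ) ≤ ((min a b : ℕ) : ℝ) - 1 := by
    rw [sub_nonneg]; exact_mod_cast (show 1 ≤ min a b by omega)
  exact one_sub_mul_le_of_sq_div_le (by positivity) (by positivity)
    (Real.rpow_pos_of_pos (div_pos (by positivity) (by linarith)) _) hε.le hi hE
    (rpow_one_div_mul_le (by exact_mod_cast hn0) hM (by omega) hm hε
      ((Nat.le_ceil _).trans (by exact_mod_cast hεn)))
end

section
/- Let s, t, a be integers with 2 ≤ a ≤ s ≤ t and a(s + t - a - 2) ≥ 1. Then there exists a natural number n₀ such that for all n ≥ n₀, r(K_{n,n}, K_{s,t}, st - a(s + t - a - 2) + 1) ≥ (n/(t-1))^{1/a}. -/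
open Finset

/-!
Fix `a` left vertices `A₀`. When `n > (t - 1) k^a`, pigeonhole on the color vectors
`(c(v, b))_{v ∈ A₀}` gives `t` right vertices `B` all seen alike from `A₀`, so `A₀ × B` carries
at most `a` colors. Fix `a` vertices `B₀ ⊆ B`; pigeonhole once more gives `s - a` further left
vertices `C` all seen alike from `B₀`. The copy `(A₀ ∪ C) × B` of `K_{s,t}` then carries at most
`a + a + (s - a)(t - a) = st - a(s + t - a - 2)` colors, so every `(K_{s,t}, q)`-coloring with
`k` colors has `n ≤ (t - 1) k^a`.
-/

section Pigeonhole

variable {α β γ : Type*}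

theorem exists_subset_card_eq_forall_eq_of_mul_lt [DecidableEq β] [Fintype β] (f : α → β)
    (S : Finset α) {r : ℕ} (h : Fintype.card β * (r - 1) < #S) :
    ∃ T ⊆ S, #T = r ∧ ∀ x ∈ T, ∀ y ∈ T, f x = f y := by
  obtain ⟨z, -, hz⟩ := exists_lt_card_fiber_of_mul_lt_card_of_maps_to (t := univ) (f := f)
    (fun _ _ => mem_univ _) (by rwa [card_univ])
  obtain ⟨T, hTS, hT⟩ := exists_subset_card_eq (show r ≤ #{x ∈ S | f x = z} by omega)
  refine ⟨T, hTS.trans (filter_subset _ _), hT, fun x hx y hy => ?_⟩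
  rw [(mem_filter.1 (hTS hx)).2, (mem_filter.1 (hTS hy)).2]

theorem card_image_product_le_card_left [DecidableEq γ] (c : α → β → γ) (A : Finset α)
    (B : Finset β) (h : ∀ x ∈ A, ∀ y ∈ B, ∀ y' ∈ B, c x y = c x y') :
    #((A ×ˢ B).image fun p => c p.1 p.2) ≤ #A := by
  rcases B.eq_empty_or_nonempty with rfl | ⟨y₀, hy₀⟩
  · simp
  calc #((A ×ˢ B).image fun p => c p.1 p.2)
      ≤ #(A.image (c · y₀)) := by
        refine card_le_card fun z hz => ?_
        obtain ⟨⟨x, y⟩, hxy, rfl⟩ := mem_image.1 hz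
        obtain ⟨hx, hy⟩ := mem_product.1 hxy
        exact mem_image.2 ⟨x, hx, h x hx y₀ hy₀ y hy⟩
    _ ≤ #A := card_image_le

theorem card_image_product_le_card_right [DecidableEq α] [DecidableEq β] [DecidableEq γ]
    (c : α → β → γ) (A : Finset α) (B : Finset β)
    (h : ∀ x ∈ A, ∀ x' ∈ A, ∀ y ∈ B, c x y = c x' y) :
    #((A ×ˢ B).image fun p => c p.1 p.2) ≤ #B := by
  rw [← image_swap_product A B, image_image]
  exact card_image_product_le_card_left (fun y x => c x y) B A
    fun y hy x hx x' hx' => h x hx x' hx' y hy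

end Pigeonhole

theorem exists_card_image_product_le {α β γ : Type*} [Fintype α] [Fintype β] [Fintype γ]
    [DecidableEq α] [DecidableEq β] [DecidableEq γ] (c : α → β → γ) {s t a : ℕ}
    (has : a ≤ s) (hat : a ≤ t)
    (hα : Fintype.card γ ^ a * (s - a - 1) + a < Fintype.card α)
    (hβ : Fintype.card γ ^ a * (t - 1) < Fintype.card β) :
    ∃ (A : Finset α) (B : Finset β), #A = s ∧ #B = t ∧
      #((A ×ˢ B).image fun p => c p.1 p.2) ≤ 2 * a + (s - a) * (t - a) := by
  obtain ⟨A₀, -, hA₀⟩ := exists_subset_card_eq (show a ≤ #(univ : Finset α) by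
    rw [card_univ]; omega)
  obtain ⟨B, -, hB, hBalike⟩ := exists_subset_card_eq_forall_eq_of_mul_lt
    (fun y (x : A₀) => c x y) univ (r := t)
    (by rwa [Fintype.card_fun, Fintype.card_coe, hA₀, card_univ])
  obtain ⟨B₀, hB₀B, hB₀⟩ := exists_subset_card_eq (show a ≤ #B by omega)
  obtain ⟨C, hCA₀, hC, hCalike⟩ := exists_subset_card_eq_forall_eq_of_mul_lt
    (fun x (y : B₀) => c x y) (univ \ A₀) (r := s - a)
    (by rw [Fintype.card_fun, Fintype.card_coe, hB₀, card_sdiff_of_subset (subset_univ _),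
      card_univ, hA₀]; omega)
  have hdisj : Disjoint A₀ C := disjoint_of_subset_right hCA₀ disjoint_sdiff
  refine ⟨A₀ ∪ C, B, by rw [card_union_of_disjoint hdisj, hA₀, hC]; omega, hB, ?_⟩
  have hsplit : (A₀ ∪ C) ×ˢ B = A₀ ×ˢ B ∪ (C ×ˢ B₀ ∪ C ×ˢ (B \ B₀)) := by
    rw [union_product, ← product_union, union_sdiff_of_subset hB₀B]
  have hA₀Bimg : #((A₀ ×ˢ B).image fun p => c p.1 p.2) ≤ a :=
    hA₀ ▸ card_image_product_le_card_left c A₀ B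
      fun x hx y hy y' hy' => congrFun (hBalike y hy y' hy') ⟨x, hx⟩
  have hCB₀img : #((C ×ˢ B₀).image fun p => c p.1 p.2) ≤ a :=
    hB₀ ▸ card_image_product_le_card_right c C B₀
      fun x hx x' hx' y hy => congrFun (hCalike x hx x' hx') ⟨y, hy⟩
  have hrest : #((C ×ˢ (B \ B₀)).image fun p => c p.1 p.2) ≤ (s - a) * (t - a) := by
    refine card_image_le.trans_eq ?_
    rw [card_product, hC, card_sdiff_of_subset hB₀B, hB, hB₀]
  rw [hsplit, image_union, image_union]
  calc _ ≤ #((A₀ ×ˢ B).image fun p => c p.1 p.2)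
          + (#((C ×ˢ B₀).image fun p => c p.1 p.2)
            + #((C ×ˢ (B \ B₀)).image fun p => c p.1 p.2)) :=
        (card_union_le _ _).trans (Nat.add_le_add_left (card_union_le _ _) _)
    _ ≤ a + (a + (s - a) * (t - a)) := by gcongr
    _ = 2 * a + (s - a) * (t - a) := by ring

theorem mul_sub_mul_add_sub_sub_two {s t a : ℕ} (ha : 2 ≤ a) (has : a ≤ s) (hst : s ≤ t) :
    s * t - a * (s + t - a - 2) = 2 * a + (s - a) * (t - a) := by
  obtain ⟨s, rfl⟩ := Nat.exists_eq_add_of_le has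
  obtain ⟨t, rfl⟩ := Nat.exists_eq_add_of_le (show a ≤ t by omega)
  obtain ⟨a, rfl⟩ := Nat.exists_eq_add_of_le ha
  rw [show 2 + a + s + (2 + a + t) - (2 + a) - 2 = a + s + t by omega]
  simp only [Nat.add_sub_cancel_left]
  rw [Nat.sub_eq_of_eq_add]
  ring

/-- A `(K_{s,t}, q)`-coloring of `K_{n,n}` with colors below `k`. -/
def IsBicliqueColoring (n s t q k : ℕ) (c : Fin n → Fin n → ℕ) : Prop :=
  (∀ a b, c a b < k) ∧
    ∀ A B : Finset (Fin n),
      (A.card = s ∧ B.card = t) ∨ (A.card = t ∧ B.card = s) →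
      q ≤ ((A ×ˢ B).image fun p => c p.1 p.2).card

theorem isBicliqueColoring_finProdFinEquiv {n s t q : ℕ} (hq : q ≤ s * t) :
    IsBicliqueColoring n s t q (n * n) fun i j => (finProdFinEquiv (i, j) : Fin (n * n)) := by
  refine ⟨fun i j => (finProdFinEquiv (i, j)).isLt, fun A B hAB => ?_⟩
  have hinj : Set.InjOn (fun p : Fin n × Fin n => (finProdFinEquiv p : ℕ)) ↑(A ×ˢ B) :=
    fun p _ p' _ h => finProdFinEquiv.injective (Fin.ext h)
  rw [card_image_of_injOn hinj, card_product]
  rcases hAB with ⟨hA, hB⟩ | ⟨hA, hB⟩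
  · rwa [hA, hB]
  · rwa [hA, hB, Nat.mul_comm]

theorem exists_isBicliqueColoring_rBip {n s t q : ℕ} (hq : q ≤ s * t) :
    ∃ c, IsBicliqueColoring n s t q (rBip n s t q) c :=
  Nat.sInf_mem (s := {k | ∃ c, IsBicliqueColoring n s t q k c})
    ⟨n * n, _, isBicliqueColoring_finProdFinEquiv hq⟩

theorem le_of_isBicliqueColoring {n s t a k : ℕ} {c : Fin n → Fin n → ℕ} (ha : 2 ≤ a)
    (has : a ≤ s) (hst : s ≤ t) (hn : a < n)
    (hc : IsBicliqueColoring n s t (s * t - a * (s + t - a - 2) + 1) k c) :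
    n ≤ (t - 1) * k ^ a := by
  obtain ⟨hck, hcol⟩ := hc
  by_contra! hlarge
  have hk : 1 ≤ k ^ a := Nat.one_le_pow _ _ (Nat.zero_lt_of_lt (hck ⟨0, by omega⟩ ⟨0, by omega⟩))
  have hα : k ^ a * (s - a - 1) + a < n := by
    rcases has.eq_or_lt with rfl | hlt
    · simpa using hn
    calc k ^ a * (s - a - 1) + a ≤ k ^ a * (s - a - 1) + k ^ a * a :=
          Nat.add_le_add_left (Nat.le_mul_of_pos_left a hk) _
      _ = k ^ a * (s - 1) := by rw [← Nat.mul_add]; congr 1; omega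
      _ ≤ k ^ a * (t - 1) := Nat.mul_le_mul_left _ (by omega)
      _ < n := by rwa [Nat.mul_comm]
  obtain ⟨A, B, hA, hB, hAB⟩ := exists_card_image_product_le
    (fun i j => (⟨c i j, hck i j⟩ : Fin k)) has (has.trans hst)
    (by simpa using hα) (by simpa [Nat.mul_comm] using hlarge)
  have hvals : #((A ×ˢ B).image fun p => (⟨c p.1 p.2, hck _ _⟩ : Fin k))
      = #((A ×ˢ B).image fun p => c p.1 p.2) := by
    rw [← card_image_of_injective _ Fin.val_injective, image_image]
    rfl
  have hmany := hcol A B (Or.inl ⟨hA, hB⟩)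
  rw [mul_sub_mul_add_sub_sub_two ha has hst] at hmany
  omega

/-- For `2 ≤ a ≤ s ≤ t` with `a(s + t - a - 2) ≥ 1`,
`r(K_{n,n}, K_{s,t}, st - a(s+t-a-2) + 1) ≥ (n/(t-1))^{1/a}` for large `n`. -/
theorem stmt_17 (s t a : ℕ) (ha : 2 ≤ a) (has : a ≤ s) (hst : s ≤ t)
    (hprod : 1 ≤ a * (s + t - a - 2)) :
    ∃ n₀ : ℕ, ∀ n : ℕ, n₀ ≤ n →
      ((n : ℝ) / ((t : ℝ) - 1)) ^ ((1 : ℝ) / (a : ℝ)) ≤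
        (rBip n s t (s * t - a * (s + t - a - 2) + 1) : ℝ) := by
  refine ⟨a + 1, fun n hn => ?_⟩
  have hq : s * t - a * (s + t - a - 2) + 1 ≤ s * t := by
    have : 1 ≤ s * t := Nat.mul_pos (by omega) (by omega)
    omega
  obtain ⟨c, hc⟩ := exists_isBicliqueColoring_rBip (n := n) hq
  have hle := le_of_isBicliqueColoring ha has hst hn hc
  have ht : (1 : ℝ) < t := by exact_mod_cast (show 1 < t by omega)
  have hreal : (n : ℝ) ≤ ((t : ℝ) - 1) * (rBip n s t (s * t - a * (s + t - a - 2) + 1) : ℝ) ^ a := by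
    have := Nat.cast_le (α := ℝ) |>.2 hle
    rwa [Nat.cast_mul, Nat.cast_sub (by omega), Nat.cast_one, Nat.cast_pow] at this
  rw [one_div, Real.rpow_inv_le_iff_of_pos (by positivity) (by positivity) (by positivity),
    Real.rpow_natCast, div_le_iff₀ (by linarith)]
  linarith
end

section
/- (Generalized Corrádi lemma.) Let r and m be integers with 2 ≤ r ≤ m, let a be a positive integer and ℓ a nonnegative integer, and let X₁, X₂, …, X_m be finite sets with |X_i| ≥ a for all i ∈ {1,…,m}. Suppose that |X_{j₁} ∩ X_{j₂} ∩ ⋯ ∩ X_{j_r}| ≤ ℓ for all indices 1 ≤ j₁ < j₂ < ⋯ < j_r ≤ m. Then |X₁ ∪ X₂ ∪ ⋯ ∪ X_m| ≥ ( a^r · m^{r-1} / ( a·(m^{r-1} − (m-1)!/(m-r)!) + ((m-1)!/(m-r)!)·ℓ ) )^{1/(r-1)}. -/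
open Finset

lemma corradi_desc_id (b k : ℕ) :
    (b + 1).descFactorial (k + 1) = b.descFactorial (k + 1) + (k + 1) * b.descFactorial k := by
  rw [Nat.succ_descFactorial_succ, Nat.descFactorial_succ]
  rcases le_or_gt k b with h | h
  · have : b + 1 = (b - k) + (k + 1) := by omega
    rw [this, add_mul]
  · have h0 : b.descFactorial k = 0 := Nat.descFactorial_eq_zero_iff_lt.mpr h
    simp [h0]

lemma corradi_pow_step (b : ℕ) :
    ∀ k : ℕ, (b + 1) ^ (k + 1) + (k + 1) * (b + 1) ^ k ≤ (b + 2) ^ (k + 1)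
  | 0 => by simp
  | k + 1 => by
    have ih := corradi_pow_step b k
    calc (b + 1) ^ (k + 2) + (k + 2) * (b + 1) ^ (k + 1)
        = (b + 2) * (b + 1) ^ (k + 1) + (k + 1) * ((b + 1) * (b + 1) ^ k) := by ring
      _ ≤ (b + 2) * (b + 1) ^ (k + 1) + (k + 1) * ((b + 2) * (b + 1) ^ k) := by
          exact Nat.add_le_add_left (Nat.mul_le_mul_left _ (Nat.mul_le_mul_right _ (by omega))) _
      _ = (b + 2) * ((b + 1) ^ (k + 1) + (k + 1) * (b + 1) ^ k) := by ring
      _ ≤ (b + 2) * (b + 2) ^ (k + 1) := Nat.mul_le_mul_left _ ih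
      _ = (b + 2) ^ (k + 2) := by ring

lemma corradi_step (b : ℕ) :
    ∀ k : ℕ, (b + 1).descFactorial k + (b + 1) ^ k ≤ b.descFactorial k + (b + 2) ^ k
  | 0 => by simp
  | k + 1 => by
    rw [corradi_desc_id]
    have h1 : (k + 1) * b.descFactorial k ≤ (k + 1) * (b + 1) ^ k :=
      Nat.mul_le_mul_left _
        ((Nat.descFactorial_le_pow b k).trans (Nat.pow_le_pow_left (by omega) k))
    have h2 := corradi_pow_step b k
    omega

lemma corradi_chain (c k : ℕ) :
    ∀ e : ℕ, (c + 1) ^ k + (c + e).descFactorial k ≤ c.descFactorial k + (c + e + 1) ^ k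
  | 0 => by simp only [Nat.add_zero]; omega
  | e + 1 => by
    have ih := corradi_chain c k e
    have hs := corradi_step (c + e) k
    have hrw : c + (e + 1) = c + e + 1 := by omega
    rw [hrw]
    have hrw2 : c + e + 1 + 1 = c + e + 2 := by omega
    rw [hrw2]
    omega

lemma corradi_pointwise (k d m : ℕ) (hdm : d ≤ m) :
    d ^ (k + 1) + (m - 1).descFactorial k * d ≤ d.descFactorial (k + 1) + m ^ k * d := by
  rcases Nat.eq_zero_or_pos d with rfl | hd
  · simp
  obtain ⟨c, rfl⟩ : ∃ c, d = c + 1 := ⟨d - 1, by omega⟩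
  obtain ⟨e, rfl⟩ : ∃ e, m = c + e + 1 := ⟨m - 1 - c, by omega⟩
  have h := corradi_chain c k e
  rw [show c + e + 1 - 1 = c + e by omega, Nat.succ_descFactorial_succ]
  calc (c + 1) ^ (k + 1) + (c + e).descFactorial k * (c + 1)
      = ((c + 1) ^ k + (c + e).descFactorial k) * (c + 1) := by ring
    _ ≤ (c.descFactorial k + (c + e + 1) ^ k) * (c + 1) := Nat.mul_le_mul_right _ h
    _ = (c + 1) * c.descFactorial k + (c + e + 1) ^ k * (c + 1) := by ring

/-- Generalized Corrádi lemma: if `X₁, …, X_m` are finite sets with `|X_i| ≥ a` and every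
`r` of them intersect in at most `ℓ` elements, then
`|X₁ ∪ ⋯ ∪ X_m| ≥ (aʳ m^{r-1} / (a (m^{r-1} − (m-1)!/(m-r)!) + ((m-1)!/(m-r)!) ℓ))^{1/(r-1)}`. -/
theorem stmt_18 {α : Type*} [DecidableEq α] (r m a ℓ : ℕ)
    (hr : 2 ≤ r) (hrm : r ≤ m) (ha : 1 ≤ a)
    (X : Fin m → Finset α)
    (hX : ∀ i, a ≤ (X i).card)
    (hInt : ∀ s : Finset (Fin m), s.card = r → ∀ hs : s.Nonempty,
      ((s.inf' hs X).card : ℕ) ≤ ℓ) :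
    ((a : ℝ) ^ r * (m : ℝ) ^ (r - 1) /
        ((a : ℝ) * ((m : ℝ) ^ (r - 1) - ((m - 1).descFactorial (r - 1) : ℝ)) +
          ((m - 1).descFactorial (r - 1) : ℝ) * (ℓ : ℝ))) ^ ((1 : ℝ) / ((r : ℝ) - 1)) ≤
      ((Finset.univ.biUnion X).card : ℝ) := by
  classical
  set N := Finset.univ.biUnion X with hN
  set d : α → ℕ := fun x => (Finset.univ.filter (fun i => x ∈ X i)).card with hd
  have hm : 2 ≤ m := hr.trans hrm
  have hXN : ∀ i, X i ⊆ N := fun i => Finset.subset_biUnion_of_mem X (Finset.mem_univ i)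
  -- (1) sum of degrees is at least a * m
  have h1 : ∑ i, (X i).card ≤ ∑ x ∈ N, d x := by
    have : ∑ x ∈ N, d x = ∑ i, (X i).card := by
      simp only [hd, Finset.card_filter]
      rw [Finset.sum_comm]
      refine Finset.sum_congr rfl fun i _ => ?_
      rw [← Finset.card_filter]
      congr 1
      rw [Finset.filter_mem_eq_inter, Finset.inter_eq_right.mpr (hXN i)]
    exact this.ge
  have h1' : a * m ≤ ∑ x ∈ N, d x := by
    refine le_trans ?_ h1
    calc a * m = ∑ _i : Fin m, a := by simp [Finset.sum_const, mul_comm]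
      _ ≤ ∑ i, (X i).card := Finset.sum_le_sum fun i _ => hX i
  -- (2) intersection counting
  have h2 : ∑ x ∈ N, (d x).choose r ≤ m.choose r * ℓ := by
    have key : ∀ x : α, (d x).choose r =
        ∑ S ∈ Finset.univ.powersetCard r,
          if S ⊆ Finset.univ.filter (fun i => x ∈ X i) then 1 else 0 := by
      intro x
      rw [← Finset.card_powersetCard, ← Finset.card_filter]
      congr 1
      ext S
      simp only [Finset.mem_powersetCard, Finset.mem_filter]
      constructor
      · exact fun ⟨h1, h2⟩ => ⟨⟨Finset.subset_univ S, h2⟩, h1⟩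
      · exact fun ⟨⟨_, h2⟩, h1⟩ => ⟨h1, h2⟩
    calc ∑ x ∈ N, (d x).choose r
        = ∑ S ∈ Finset.univ.powersetCard r, ∑ x ∈ N,
            (if S ⊆ Finset.univ.filter (fun i => x ∈ X i) then 1 else 0) := by
          simp only [key]; rw [Finset.sum_comm]
      _ ≤ ∑ S ∈ Finset.univ.powersetCard r, ℓ := by
          refine Finset.sum_le_sum fun S hS => ?_
          rw [← Finset.card_filter]
          have hScard : S.card = r := (Finset.mem_powersetCard.mp hS).2
          have hSne : S.Nonempty := Finset.card_pos.mp (by omega)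
          refine le_trans (Finset.card_le_card ?_) (hInt S hScard hSne)
          intro x hx
          simp only [Finset.mem_filter] at hx
          rw [Finset.mem_inf' hSne]
          intro i hi
          have := hx.2 hi
          simpa using this
      _ = m.choose r * ℓ := by
          rw [Finset.sum_const, Finset.card_powersetCard, Finset.card_univ, Fintype.card_fin,
            smul_eq_mul]
  -- (2') descending factorial version
  have h2' : ∑ x ∈ N, (d x).descFactorial r ≤ m.descFactorial r * ℓ := by
    calc ∑ x ∈ N, (d x).descFactorial r = ∑ x ∈ N, r.factorial * (d x).choose r := by
          refine Finset.sum_congr rfl fun x _ => Nat.descFactorial_eq_factorial_mul_choose _ _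
      _ = r.factorial * ∑ x ∈ N, (d x).choose r := by rw [Finset.mul_sum]
      _ ≤ r.factorial * (m.choose r * ℓ) := Nat.mul_le_mul_left _ h2
      _ = (r.factorial * m.choose r) * ℓ := by ring
      _ = m.descFactorial r * ℓ := by rw [← Nat.descFactorial_eq_factorial_mul_choose]
  -- (3) pointwise degree bound summed
  have h3 : ∑ x ∈ N, ((d x) ^ r + (m - 1).descFactorial (r - 1) * d x) ≤
      ∑ x ∈ N, ((d x).descFactorial r + m ^ (r - 1) * d x) := by
    refine Finset.sum_le_sum fun x _ => ?_
    have hdm : d x ≤ m := by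
      simpa [hd] using (Finset.card_filter_le Finset.univ (fun i => x ∈ X i)).trans_eq
        (by simp)
    have := corradi_pointwise (r - 1) (d x) m hdm
    rwa [show r - 1 + 1 = r by omega] at this
  -- notation for casts
  set s : ℕ := ∑ x ∈ N, d x with hs
  set n : ℕ := N.card with hn
  set D : ℕ := (m - 1).descFactorial (r - 1) with hD
  have hmD : m.descFactorial r = m * D := by
    rw [hD, show r = (r - 1) + 1 by omega, show m = (m - 1) + 1 by omega,
      Nat.succ_descFactorial_succ]
    congr 1 <;> omega
  -- positivity facts
  have hn0 : 0 < n := by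
    have : X ⟨0, by omega⟩ ⊆ N := hXN _
    have hcard : 0 < (X ⟨0, by omega⟩).card := lt_of_lt_of_le ha (hX _)
    exact lt_of_lt_of_le hcard (Finset.card_le_card this)
  have hs0 : 0 < s := lt_of_lt_of_le (by positivity) h1'
  have hDlt : D + 1 ≤ m ^ (r - 1) := by
    have h1 : D ≤ (m - 1) ^ (r - 1) := Nat.descFactorial_le_pow _ _
    have h2 : (m - 1) ^ (r - 1) < m ^ (r - 1) :=
      Nat.pow_lt_pow_left (by omega) (by omega)
    omega
  -- real versions
  have hNne : N.Nonempty := Finset.card_pos.mp hn0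
  -- power mean
  have hPM : (s : ℝ) ^ r ≤ (n : ℝ) ^ (r - 1) * ∑ x ∈ N, (d x : ℝ) ^ r := by
    have := pow_sum_le_card_mul_sum_pow (s := N) (f := fun x => (d x : ℝ))
      (fun i _ => by positivity) (r - 1)
    rw [show r - 1 + 1 = r by omega] at this
    simpa [hs, hn] using this
  -- cast of (3)+(2')
  have hT : (∑ x ∈ N, (d x : ℝ) ^ r) + (D : ℝ) * s ≤
      (m : ℝ) * D * ℓ + (m : ℝ) ^ (r - 1) * s := by
    have hnat : (∑ x ∈ N, ((d x) ^ r + D * d x)) ≤ m * D * ℓ + m ^ (r - 1) * s := by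
      refine h3.trans ?_
      rw [Finset.sum_add_distrib, ← Finset.mul_sum, ← hs]
      have := h2'
      rw [hmD] at this
      omega
    have := (Nat.cast_le (α := ℝ)).mpr hnat
    push_cast at this
    rw [Finset.sum_add_distrib, ← Finset.mul_sum] at this
    push_cast [hs]
    push_cast [hs] at this
    linarith
  -- main real inequality
  have hA : (a : ℝ) * m ≤ s := by exact_mod_cast h1'
  have hA0 : (0 : ℝ) < (a : ℝ) * m := by
    have : (0:ℕ) < a * m := by positivity
    exact_mod_cast this
  have hsR : (0 : ℝ) < (s : ℝ) := by exact_mod_cast hs0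
  have hDR : ((D : ℝ) + 1) ≤ (m : ℝ) ^ (r - 1) := by exact_mod_cast hDlt
  have hmain : ((a : ℝ) * m) ^ r ≤
      (n : ℝ) ^ (r - 1) * ((m : ℝ) ^ (r - 1) - D) * ((a : ℝ) * m) +
        (n : ℝ) ^ (r - 1) * ((m : ℝ) * D * ℓ) := by
    have hT' : (∑ x ∈ N, (d x : ℝ) ^ r) ≤
        (m : ℝ) * D * ℓ + ((m : ℝ) ^ (r - 1) - D) * s := by linarith [hT]
    have hnpow : (0 : ℝ) ≤ (n : ℝ) ^ (r - 1) := by positivity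
    have step1 : ((a : ℝ) * m) * (s : ℝ) ^ r ≤
        ((a : ℝ) * m) * ((n : ℝ) ^ (r - 1) * ∑ x ∈ N, (d x : ℝ) ^ r) :=
      mul_le_mul_of_nonneg_left hPM (le_of_lt hA0)
    have step2 : ((a : ℝ) * m) * ((n : ℝ) ^ (r - 1) * ∑ x ∈ N, (d x : ℝ) ^ r) ≤
        ((a : ℝ) * m) * ((n : ℝ) ^ (r - 1) *
          ((m : ℝ) * D * ℓ + ((m : ℝ) ^ (r - 1) - D) * s)) :=
      mul_le_mul_of_nonneg_left (mul_le_mul_of_nonneg_left hT' hnpow) (le_of_lt hA0)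
    have step3 : ((a : ℝ) * m) * ((n : ℝ) ^ (r - 1) * ((m : ℝ) * D * ℓ)) ≤
        (s : ℝ) * ((n : ℝ) ^ (r - 1) * ((m : ℝ) * D * ℓ)) := by
      refine mul_le_mul_of_nonneg_right hA (by positivity)
    have hkey : ((a : ℝ) * m) * (s : ℝ) ^ r ≤
        ((n : ℝ) ^ (r - 1) * ((m : ℝ) ^ (r - 1) - D) * ((a : ℝ) * m) +
          (n : ℝ) ^ (r - 1) * ((m : ℝ) * D * ℓ)) * s := by nlinarith [step1, step2, step3]
    have hpows : (s : ℝ) ^ r = (s : ℝ) ^ (r - 1) * s := by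
      rw [← pow_succ]; congr 1; omega
    have hkey' : (((a : ℝ) * m) * (s : ℝ) ^ (r - 1)) * s ≤
        ((n : ℝ) ^ (r - 1) * ((m : ℝ) ^ (r - 1) - D) * ((a : ℝ) * m) +
          (n : ℝ) ^ (r - 1) * ((m : ℝ) * D * ℓ)) * s := by
      calc (((a : ℝ) * m) * (s : ℝ) ^ (r - 1)) * s
          = ((a : ℝ) * m) * (s : ℝ) ^ r := by rw [hpows]; ring
        _ ≤ _ := hkey
    have hcancel := le_of_mul_le_mul_right hkey' hsR
    have hpowA : ((a : ℝ) * m) ^ r = ((a : ℝ) * m) * ((a : ℝ) * m) ^ (r - 1) := by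
      rw [← pow_succ']; congr 1; omega
    have hApow : ((a : ℝ) * m) ^ (r - 1) ≤ (s : ℝ) ^ (r - 1) :=
      pow_le_pow_left₀ (le_of_lt hA0) hA _
    calc ((a : ℝ) * m) ^ r = ((a : ℝ) * m) * ((a : ℝ) * m) ^ (r - 1) := hpowA
      _ ≤ ((a : ℝ) * m) * (s : ℝ) ^ (r - 1) := mul_le_mul_of_nonneg_left hApow (le_of_lt hA0)
      _ ≤ _ := hcancel
  -- divide by m
  have hmR : (0 : ℝ) < (m : ℝ) := by
    have : (0:ℕ) < m := by omega
    exact_mod_cast this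
  have hfin : (a : ℝ) ^ r * (m : ℝ) ^ (r - 1) ≤
      (n : ℝ) ^ (r - 1) * ((a : ℝ) * ((m : ℝ) ^ (r - 1) - D) + (D : ℝ) * ℓ) := by
    have e1 : ((a : ℝ) * m) ^ r = ((a : ℝ) ^ r * (m : ℝ) ^ (r - 1)) * m := by
      rw [mul_pow, show (m:ℝ) ^ r = (m:ℝ) ^ (r-1) * m by rw [← pow_succ]; congr 1; omega]
      ring
    have e2 : (n : ℝ) ^ (r - 1) * ((m : ℝ) ^ (r - 1) - D) * ((a : ℝ) * m) +
        (n : ℝ) ^ (r - 1) * ((m : ℝ) * D * ℓ) =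
        ((n : ℝ) ^ (r - 1) * ((a : ℝ) * ((m : ℝ) ^ (r - 1) - D) + (D : ℝ) * ℓ)) * m := by
      ring
    rw [e1, e2] at hmain
    exact le_of_mul_le_mul_right hmain hmR
  -- denominator positivity
  have haR : (1 : ℝ) ≤ (a : ℝ) := by exact_mod_cast ha
  have hden : (0 : ℝ) < (a : ℝ) * ((m : ℝ) ^ (r - 1) - D) + (D : ℝ) * ℓ := by
    have h1 : (1 : ℝ) ≤ (m : ℝ) ^ (r - 1) - D := by linarith
    have h2 : (0 : ℝ) ≤ (D : ℝ) * ℓ := by positivity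
    nlinarith
  have hQ : (a : ℝ) ^ r * (m : ℝ) ^ (r - 1) /
      ((a : ℝ) * ((m : ℝ) ^ (r - 1) - D) + (D : ℝ) * ℓ) ≤ (n : ℝ) ^ (r - 1) :=
    (div_le_iff₀ hden).mpr hfin
  have hQ0 : (0 : ℝ) ≤ (a : ℝ) ^ r * (m : ℝ) ^ (r - 1) /
      ((a : ℝ) * ((m : ℝ) ^ (r - 1) - D) + (D : ℝ) * ℓ) :=
    div_nonneg (by positivity) hden.le
  have he : (0 : ℝ) ≤ 1 / ((r : ℝ) - 1) := by
    have : (2 : ℝ) ≤ (r : ℝ) := by exact_mod_cast hr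
    exact div_nonneg zero_le_one (by linarith)
  calc ((a : ℝ) ^ r * (m : ℝ) ^ (r - 1) /
        ((a : ℝ) * ((m : ℝ) ^ (r - 1) - D) + (D : ℝ) * ℓ)) ^ ((1 : ℝ) / ((r : ℝ) - 1))
      ≤ ((n : ℝ) ^ (r - 1)) ^ ((1 : ℝ) / ((r : ℝ) - 1)) := Real.rpow_le_rpow hQ0 hQ he
    _ = (n : ℝ) := by
        rw [← Real.rpow_natCast (n : ℝ) (r - 1), ← Real.rpow_mul (by positivity)]
        rw [show ((r - 1 : ℕ) : ℝ) * ((1 : ℝ) / ((r : ℝ) - 1)) = 1 by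
          rw [Nat.cast_sub (by omega : 1 ≤ r), Nat.cast_one]
          have : (2 : ℝ) ≤ (r : ℝ) := by exact_mod_cast hr
          rw [mul_one_div, div_self (by linarith)]]
        exact Real.rpow_one _
end

section
/- Let s, t, k be integers with t ≥ s ≥ 2 and 0 ≤ k ≤ ⌊s/2⌋ - 1. Then there exists a natural number n₀ such that for all n ≥ n₀, r(K_{n,n}, K_{s,t}, st - k) = n² - k. -/
open Finset

/-- If a function `f` has at least `d` "collisions" on `S`, there is a subset `F ⊆ S`
of size at most `2d` that already realizes `d` collisions. -/
lemma exists_small_excess {α β : Type*} [DecidableEq α] [DecidableEq β] (f : α → β) :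
    ∀ (d : ℕ) (S : Finset α), (S.image f).card + d ≤ S.card →
    ∃ F : Finset α, F ⊆ S ∧ F.card ≤ 2 * d ∧ (F.image f).card + d ≤ F.card := by
  intro d
  induction d with
  | zero => intro S _; exact ⟨∅, empty_subset _, by simp, by simp⟩
  | succ d ih =>
    intro S hS
    obtain ⟨F, hFS, hFc, hFe⟩ := ih S (by omega)
    by_cases hbig : (F.image f).card + (d + 1) ≤ F.card
    · exact ⟨F, hFS, by omega, hbig⟩
    by_cases hex : ∃ x ∈ S \ F, f x ∈ F.image f
    · obtain ⟨x, hx, hfx⟩ := hex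
      rw [mem_sdiff] at hx
      refine ⟨insert x F, insert_subset hx.1 hFS, ?_, ?_⟩
      · rw [card_insert_of_notMem hx.2]; omega
      · rw [card_insert_of_notMem hx.2, image_insert, insert_eq_self.2 hfx]
        omega
    · push_neg at hex
      have hdisj : Disjoint (F.image f) ((S \ F).image f) := by
        rw [disjoint_right]
        intro b hb hb'
        obtain ⟨x, hx, rfl⟩ := mem_image.1 hb
        exact hex x hx hb'
      have hunion : S.image f = F.image f ∪ (S \ F).image f := by
        rw [← image_union, union_sdiff_of_subset hFS]
      have h1 : (S.image f).card = (F.image f).card + ((S \ F).image f).card := by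
        rw [hunion, card_union_of_disjoint hdisj]
      have h2 : (S \ F).card = S.card - F.card := card_sdiff_of_subset hFS
      have hFS' : F.card ≤ S.card := card_le_card hFS
      have hcard : ((S \ F).image f).card < (S \ F).card := by omega
      obtain ⟨x, hx, y, hy, hxy, hfxy⟩ :=
        exists_ne_map_eq_of_card_lt_of_maps_to hcard (fun a ha => mem_image_of_mem f ha)
      rw [mem_sdiff] at hx hy
      have hxny : x ∉ insert y F := by
        simp only [mem_insert]
        push_neg
        exact ⟨hxy, hx.2⟩
      refine ⟨insert x (insert y F), ?_, ?_, ?_⟩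
      · exact insert_subset hx.1 (insert_subset hy.1 hFS)
      · rw [card_insert_of_notMem hxny, card_insert_of_notMem hy.2]; omega
      · have hfy : f y ∉ F.image f := hex y (mem_sdiff.2 hy)
        have himg : (insert x (insert y F)).image f = insert (f y) (F.image f) := by
          rw [image_insert, image_insert, hfxy, insert_idem]
        rw [himg, card_insert_of_notMem hfy,
          card_insert_of_notMem hxny, card_insert_of_notMem hy.2]
        omega

/-- For `t ≥ s ≥ 2` and `0 ≤ k ≤ ⌊s/2⌋ - 1`, for sufficiently large `n`,
`r(K_{n,n}, K_{s,t}, st - k) = n² - k`. -/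
theorem stmt_19 (s t k : ℕ) (hs : 2 ≤ s) (hst : s ≤ t) (hk : k + 1 ≤ s / 2) :
    ∃ n₀ : ℕ, ∀ n : ℕ, n₀ ≤ n → rBip n s t (s * t - k) = n ^ 2 - k := by
  refine ⟨t, fun n hn => ?_⟩
  have hs2 : 2 * (k + 1) ≤ s := by omega
  have hsn : s ≤ n := le_trans hst hn
  have htn : t ≤ n := hn
  have hnn : n ≤ n ^ 2 := Nat.le_self_pow (by norm_num) n
  have hkst : k + 1 ≤ s * t := by
    calc k + 1 ≤ s := by omega
    _ ≤ s * t := Nat.le_mul_of_pos_right s (by omega)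
  -- the index map
  have hidx : Function.Injective (fun p : Fin n × Fin n => n * p.1.val + p.2.val) := by
    intro p q h
    simp only at h
    have h1 : (n * p.1.val + p.2.val) / n = p.1.val := by
      rw [Nat.mul_add_div (by omega), Nat.div_eq_of_lt p.2.isLt, Nat.add_zero]
    have h2 : (n * q.1.val + q.2.val) / n = q.1.val := by
      rw [Nat.mul_add_div (by omega), Nat.div_eq_of_lt q.2.isLt, Nat.add_zero]
    have hp1 : p.1 = q.1 := by
      apply Fin.ext
      rw [← h1, ← h2, h]
    have hp2 : p.2 = q.2 := by
      apply Fin.ext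
      have := h
      rw [hp1] at this
      omega
    exact Prod.ext hp1 hp2
  have hidxlt : ∀ p : Fin n × Fin n, n * p.1.val + p.2.val < n ^ 2 := by
    intro p
    have h1 : p.1.val + 1 ≤ n := p.1.isLt
    have h2 : p.2.val < n := p.2.isLt
    calc n * p.1.val + p.2.val < n * p.1.val + n := by omega
    _ = n * (p.1.val + 1) := by ring
    _ ≤ n * n := Nat.mul_le_mul_left n h1
    _ = n ^ 2 := (sq n).symm
  -- upper bound: a good coloring with n^2 - k colors
  have hmem : n ^ 2 - k ∈ {m : ℕ | ∃ c : Fin n → Fin n → ℕ,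
      (∀ a b, c a b < m) ∧
      ∀ A B : Finset (Fin n),
        (A.card = s ∧ B.card = t) ∨ (A.card = t ∧ B.card = s) →
        s * t - k ≤ ((A ×ˢ B).image fun p => c p.1 p.2).card} := by
    set g : ℕ → ℕ := fun e => if e < n ^ 2 - k then e else e - (n ^ 2 - k) with hg
    refine ⟨fun a b => g (n * a.val + b.val), ?_, ?_⟩
    · intro a b
      have h1 : n * a.val + b.val < n ^ 2 := hidxlt (a, b)
      simp only [hg]
      split <;> omega
    · intro A B hAB
      have himim : ((A ×ˢ B).image fun p => g (n * p.1.val + p.2.val)) =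
          ((A ×ˢ B).image (fun p : Fin n × Fin n => n * p.1.val + p.2.val)).image g := by
        rw [image_image]
        rfl
      set T := (A ×ˢ B).image (fun p : Fin n × Fin n => n * p.1.val + p.2.val) with hT
      have hTcard : T.card = s * t := by
        rw [hT, card_image_of_injective _ hidx, card_product]
        rcases hAB with ⟨h1, h2⟩ | ⟨h1, h2⟩ <;> rw [h1, h2]
        exact Nat.mul_comm t s
      have hTlt : ∀ e ∈ T, e < n ^ 2 := by
        intro e he
        obtain ⟨p, _, rfl⟩ := mem_image.1 he
        exact hidxlt p
      have hsub0 : T.filter (fun e => e < n ^ 2 - k) ⊆ T.image g := by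
        intro e he
        rw [mem_filter] at he
        have : g e = e := if_pos he.2
        rw [← this]
        exact mem_image_of_mem g he.1
      have hbad : (T.filter (fun e => ¬ e < n ^ 2 - k)).card ≤ k := by
        have hsub : T.filter (fun e => ¬ e < n ^ 2 - k) ⊆ Finset.Ico (n ^ 2 - k) (n ^ 2) := by
          intro e he
          rw [mem_filter] at he
          rw [mem_Ico]
          exact ⟨by omega, hTlt e he.1⟩
        calc (T.filter (fun e => ¬ e < n ^ 2 - k)).card ≤ _ := card_le_card hsub
        _ = n ^ 2 - (n ^ 2 - k) := Nat.card_Ico _ _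
        _ ≤ k := by omega
      have hsplit := card_filter_add_card_filter_not (s := T)
        (p := fun e => e < n ^ 2 - k)
      have h0 : (T.filter (fun e => e < n ^ 2 - k)).card ≤ (T.image g).card :=
        card_le_card hsub0
      rw [himim]
      omega
  -- lower bound: every valid coloring uses at least n^2 - k colors
  have hlow : ∀ m ∈ {m : ℕ | ∃ c : Fin n → Fin n → ℕ,
      (∀ a b, c a b < m) ∧
      ∀ A B : Finset (Fin n),
        (A.card = s ∧ B.card = t) ∨ (A.card = t ∧ B.card = s) →
        s * t - k ≤ ((A ×ˢ B).image fun p => c p.1 p.2).card},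
      n ^ 2 - k ≤ m := by
    rintro m ⟨c, hc, hprop⟩
    by_contra hlt
    push_neg at hlt
    have hkn : k < n ^ 2 := by omega
    set χ : Fin n × Fin n → ℕ := fun p => c p.1 p.2 with hχ
    have hEcard : (univ ×ˢ univ : Finset (Fin n × Fin n)).card = n ^ 2 := by
      rw [card_product, card_univ, Fintype.card_fin, sq]
    have himg : ((univ ×ˢ univ : Finset (Fin n × Fin n)).image χ).card ≤ m := by
      calc ((univ ×ˢ univ : Finset (Fin n × Fin n)).image χ).card
          ≤ (Finset.range m).card := by
            apply card_le_card
            intro e he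
            obtain ⟨p, _, rfl⟩ := mem_image.1 he
            exact mem_range.2 (hc p.1 p.2)
      _ = m := card_range m
    obtain ⟨F, hFsub, hFc, hFe⟩ := exists_small_excess χ (k + 1)
      (univ ×ˢ univ : Finset (Fin n × Fin n)) (by omega)
    have hRs : (F.image Prod.fst).card ≤ s :=
      le_trans (card_image_le) (le_trans hFc (by omega))
    have hCt : (F.image Prod.snd).card ≤ t :=
      le_trans (card_image_le) (le_trans hFc (by omega))
    obtain ⟨A, hRA, hAu, hA⟩ := Finset.exists_subsuperset_card_eq
      (subset_univ (F.image Prod.fst)) hRs (by rw [card_univ, Fintype.card_fin]; exact hsn)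
    obtain ⟨B, hCB, hBu, hB⟩ := Finset.exists_subsuperset_card_eq
      (subset_univ (F.image Prod.snd)) hCt (by rw [card_univ, Fintype.card_fin]; exact htn)
    have hFAB : F ⊆ A ×ˢ B := by
      intro p hp
      rw [mem_product]
      exact ⟨hRA (mem_image_of_mem _ hp), hCB (mem_image_of_mem _ hp)⟩
    have hABcard : (A ×ˢ B).card = s * t := by rw [card_product, hA, hB]
    have hFst : F.card ≤ s * t := hABcard ▸ card_le_card hFAB
    have hre : ((A ×ˢ B).image χ).card ≤ (F.image χ).card + ((A ×ˢ B) \ F).card := by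
      have : (A ×ˢ B) = F ∪ ((A ×ˢ B) \ F) := (union_sdiff_of_subset hFAB).symm
      calc ((A ×ˢ B).image χ).card
          = ((F ∪ ((A ×ˢ B) \ F)).image χ).card := by rw [← this]
      _ = ((F.image χ) ∪ (((A ×ˢ B) \ F).image χ)).card := by rw [image_union]
      _ ≤ (F.image χ).card + (((A ×ˢ B) \ F).image χ).card := card_union_le _ _
      _ ≤ (F.image χ).card + ((A ×ˢ B) \ F).card := by
            exact Nat.add_le_add_left card_image_le _
    have hsd : ((A ×ˢ B) \ F).card = s * t - F.card := by rw [card_sdiff_of_subset hFAB, hABcard]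
    have hpr := hprop A B (Or.inl ⟨hA, hB⟩)
    have hpr' : s * t - k ≤ ((A ×ˢ B).image fun p => c p.1 p.2).card := hpr
    have : ((A ×ˢ B).image χ) = ((A ×ˢ B).image fun p => c p.1 p.2) := rfl
    omega
  exact le_antisymm (Nat.sInf_le hmem) (le_csInf ⟨_, hmem⟩ hlow)
end
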